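/- arXiv:2604.12623 — 4 statements merged into one kernel-verified Lean document; each statement's English description precedes it below -/
import Mathlib

section
/- For all integers d ≥ 1, k ≥ 2 and h ≥ 2, there exist a constant c > 0 and an integer N such that for all n ≥ N and every subset A ⊆ [n]^d with |A| ≥ n^{(k−1)d/k}·log n, one has f_{d,k,h}(A) ≥ c·|A|^{kh}/n^{d(k−1)}. -/
open Finset

/-- The `d`-dimensional grid `[n]^d = {1,…,n}^d`, as a finset of functions `Fin d → ℕ`. -/
def grid (n d : ℕ) : Finset (Fin d → ℕ) :=
  Fintype.piFinset fun _ => Finset.Icc 1 n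

/-- `X` is a `B_{k,h}`-solution set: `X` consists of `k*h` (pairwise distinct) points that can
be partitioned into `k` groups of `h` points each, all groups having the same sum. -/
def IsBkhSol (d k h : ℕ) (X : Finset (Fin d → ℕ)) : Prop :=
  X.card = k * h ∧
  ∃ P : Fin k → Finset (Fin d → ℕ),
    (∀ ℓ, (P ℓ).card = h) ∧
    (∀ ℓ₁ ℓ₂, ℓ₁ ≠ ℓ₂ → Disjoint (P ℓ₁) (P ℓ₂)) ∧
    Finset.univ.biUnion P = X ∧
    (∀ ℓ₁ ℓ₂ : Fin k, (P ℓ₁).sum id = (P ℓ₂).sum id)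

/-- The coloring `c` of `A` has a rainbow solution to the `B_{k,h}`-equation. -/
def HasRainbow (d k h r : ℕ) (A : Finset (Fin d → ℕ)) (c : ↥A → Fin r) : Prop :=
  ∃ X : Finset ↥A, IsBkhSol d k h (X.image Subtype.val) ∧ Set.InjOn c ↑X

/-- `gr d k h r A` is the number of `r`-colorings of `A` without rainbow solutions to the
`B_{k,h}`-equation. -/
noncomputable def gr (d k h r : ℕ) (A : Finset (Fin d → ℕ)) : ℕ :=
  Nat.card {c : ↥A → Fin r // ¬ HasRainbow d k h r A c}

/-- `fdkh d k h A` is the number of `B_{k,h}`-solution sets contained in `A`. -/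
noncomputable def fdkh (d k h : ℕ) (A : Finset (Fin d → ℕ)) : ℕ :=
  Nat.card {X : Finset (Fin d → ℕ) // X ⊆ A ∧ IsBkhSol d k h X}

/-- sum of a tuple of points of `A` -/
def gsum {d h : ℕ} {A : Finset (Fin d → ℕ)} (q : Fin h → ↥A) : Fin d → ℕ :=
  ∑ i, (q i : Fin d → ℕ)

/-- tuples with equal group sums -/
def Etup (d k h : ℕ) (A : Finset (Fin d → ℕ)) : Finset (Fin k → Fin h → ↥A) :=
  univ.filter fun p => ∀ ℓ₁ ℓ₂, gsum (p ℓ₁) = gsum (p ℓ₂)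

/-- good tuples: equal sums and globally injective -/
def Gtup (d k h : ℕ) (A : Finset (Fin d → ℕ)) : Finset (Fin k → Fin h → ↥A) :=
  (Etup d k h A).filter fun p => Function.Injective fun z : Fin k × Fin h => p z.1 z.2

def Btup (d k h : ℕ) (A : Finset (Fin d → ℕ)) : Finset (Fin k → Fin h → ↥A) :=
  (Etup d k h A).filter fun p => ¬ Function.Injective fun z : Fin k × Fin h => p z.1 z.2

lemma E_split (d k h : ℕ) (A : Finset (Fin d → ℕ)) :
    (Etup d k h A).card = (Gtup d k h A).card + (Btup d k h A).card :=
  (Finset.card_filter_add_card_filter_not _).symm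

lemma grid_card (n d : ℕ) : (grid n d).card = n ^ d := by
  simp [grid, Fintype.card_piFinset]

section Holder
variable {d k h n : ℕ} {A : Finset (Fin d → ℕ)}

lemma gsum_mem_grid (hA : A ⊆ grid n d) (hh : 1 ≤ h) (q : Fin h → ↥A) :
    gsum q ∈ grid (h * n) d := by
  simp only [grid, Fintype.mem_piFinset, Finset.mem_Icc]
  intro j
  have hb : ∀ i : Fin h, 1 ≤ ((q i : Fin d → ℕ) j) ∧ ((q i : Fin d → ℕ) j) ≤ n := by
    intro i
    have := hA (q i).2
    simp only [grid, Fintype.mem_piFinset, Finset.mem_Icc] at this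
    exact this j
  have hg : gsum q j = ∑ i : Fin h, (q i : Fin d → ℕ) j := by
    simp [gsum]
  constructor
  · calc (1:ℕ) ≤ h := hh
    _ = ∑ _i : Fin h, 1 := by simp
    _ ≤ _ := by rw [hg]; exact Finset.sum_le_sum fun i _ => (hb i).1
  · rw [hg]
    calc ∑ i : Fin h, (q i : Fin d → ℕ) j ≤ ∑ _i : Fin h, n :=
          Finset.sum_le_sum fun i _ => (hb i).2
    _ = h * n := by simp [Finset.sum_const, mul_comm]

lemma Etup_card_eq (hk : 0 < k) :
    (Etup d k h A).card =
      ∑ s ∈ (univ : Finset (Fin h → ↥A)).image gsum,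
        ((univ : Finset (Fin h → ↥A)).filter fun q => gsum q = s).card ^ k := by
  classical
  let ℓ0 : Fin k := ⟨0, hk⟩
  rw [Finset.card_eq_sum_card_fiberwise
    (f := fun p : Fin k → Fin h → ↥A => gsum (p ℓ0))
    (t := (univ : Finset (Fin h → ↥A)).image gsum)
    (fun p _ => Finset.mem_image_of_mem _ (mem_univ _))]
  refine Finset.sum_congr rfl fun s _ => ?_
  have : ((Etup d k h A).filter fun p => gsum (p ℓ0) = s) =
      Fintype.piFinset fun _ : Fin k =>
        (univ : Finset (Fin h → ↥A)).filter fun q => gsum q = s := by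
    ext p
    simp only [Etup, Fintype.mem_piFinset, Finset.mem_filter, Finset.mem_univ, true_and]
    constructor
    · rintro ⟨hp, h0⟩ ℓ
      exact (hp ℓ ℓ0).trans h0
    · intro hp
      exact ⟨fun ℓ₁ ℓ₂ => (hp ℓ₁).trans (hp ℓ₂).symm, hp ℓ0⟩
  rw [this, Fintype.card_piFinset]
  simp

lemma sum_fibers (d h : ℕ) (A : Finset (Fin d → ℕ)) :
    ∑ s ∈ (univ : Finset (Fin h → ↥A)).image gsum,
        ((univ : Finset (Fin h → ↥A)).filter fun q => gsum q = s).card = A.card ^ h := by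
  classical
  rw [← Finset.card_eq_sum_card_fiberwise (fun q _ => Finset.mem_image_of_mem _ (mem_univ _))]
  simp [Fintype.card_coe]

lemma holder_bound (hk : 0 < k) (hh : 1 ≤ h) (hn : 0 < n) (hA : A ⊆ grid n d) (hA0 : A.Nonempty) :
    ((A.card : ℝ)) ^ (h * k) / (((h * n : ℕ) : ℝ) ^ d) ^ (k - 1)
      ≤ ((Etup d k h A).card : ℝ) := by
  classical
  set im := (univ : Finset (Fin h → ↥A)).image gsum with him
  have him_ne : im.Nonempty := by
    obtain ⟨a, ha⟩ := hA0
    exact ⟨gsum (fun _ : Fin h => (⟨a, ha⟩ : ↥A)), Finset.mem_image_of_mem _ (mem_univ _)⟩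
  have him_le : im.card ≤ (h * n) ^ d := by
    calc im.card ≤ (grid (h * n) d).card := by
          apply Finset.card_le_card
          intro s hs
          simp only [him, Finset.mem_image] at hs
          obtain ⟨q, _, rfl⟩ := hs
          exact gsum_mem_grid hA hh q
    _ = (h * n) ^ d := grid_card _ _
  have key := pow_sum_div_card_le_sum_pow
    (s := im) (f := fun s => ((((univ : Finset (Fin h → ↥A)).filter
      fun q => gsum q = s).card : ℝ))) (fun i _ => by positivity) (k - 1)
  have hk1 : k - 1 + 1 = k := Nat.succ_pred_eq_of_pos hk
  rw [hk1] at key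
  have hsum : (∑ s ∈ im, ((((univ : Finset (Fin h → ↥A)).filter
      fun q => gsum q = s).card : ℝ))) = (A.card : ℝ) ^ h := by
    rw [← Nat.cast_pow, ← sum_fibers d h A]
    push_cast [him]
    rfl
  have hEc : ((Etup d k h A).card : ℝ) = ∑ s ∈ im, ((((univ : Finset (Fin h → ↥A)).filter
      fun q => gsum q = s).card : ℝ)) ^ k := by
    rw [Etup_card_eq hk]
    push_cast [him]
    rfl
  rw [hsum] at key
  rw [hEc]
  refine le_trans ?_ key
  rw [pow_mul]
  have hhn : (0:ℝ) < ((h * n : ℕ) : ℝ) := by exact_mod_cast Nat.mul_pos hh hn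
  have h1 : (0:ℝ) < (((h * n : ℕ) : ℝ) ^ d) ^ (k-1) := by positivity
  have h2 : (0:ℝ) < (im.card : ℝ) := by exact_mod_cast him_ne.card_pos
  gcongr
  case _ => exact_mod_cast him_le


end Holder

section Bad
variable {d k h : ℕ} {A : Finset (Fin d → ℕ)}

lemma Bpair_card (hk : 1 ≤ k) (hh : 2 ≤ h) (x y : Fin k × Fin h) (hxy : x ≠ y) :
    ((Etup d k h A).filter fun p => p x.1 x.2 = p y.1 y.2).card ≤ A.card ^ (k * h - k) := by
  classical
  obtain ⟨ℓ1, i1⟩ := x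
  obtain ⟨ℓ2, i2⟩ := y
  have h0 : 0 < h := by omega
  have h1 : 1 < h := by omega
  -- an index different from i2
  set oth : Fin h := if i2 = ⟨0, h0⟩ then ⟨1, h1⟩ else ⟨0, h0⟩ with hothdef
  have hoth : oth ≠ i2 := by
    rcases eq_or_ne i2 ⟨0, h0⟩ with h' | h'
    · rw [hothdef, if_pos h', h']
      simp [Fin.ext_iff]
    · rw [hothdef, if_neg h']
      exact fun he => h' he.symm
  -- the sum-determined index in each non-reference group
  set sel : Fin k → Fin h := fun ℓ => if ℓ = ℓ2 then oth else ⟨0, h0⟩ with hseldef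
  -- the set of determined coordinates
  set D : Finset (Fin k × Fin h) :=
    insert (ℓ2, i2) ((univ.erase ℓ1).image fun ℓ => (ℓ, sel ℓ)) with hDdef
  have hynot : (ℓ2, i2) ∉ (univ.erase ℓ1).image fun ℓ => (ℓ, sel ℓ) := by
    simp only [Finset.mem_image, mem_erase, mem_univ, and_true, not_exists]
    rintro ℓ ⟨hℓ, he⟩
    have h1' : ℓ = ℓ2 := congrArg Prod.fst he
    have h2' : sel ℓ = i2 := congrArg Prod.snd he
    rw [h1'] at h2'
    simp only [hseldef, if_pos rfl] at h2'
    exact hoth h2'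
  have hDcard : D.card = k := by
    rw [hDdef, Finset.card_insert_of_notMem hynot,
      Finset.card_image_of_injective _ (fun a b hab => congrArg Prod.fst hab),
      Finset.card_erase_of_mem (mem_univ _)]
    simp only [Finset.card_univ, Fintype.card_fin]
    omega
  have hDmem : ∀ z : Fin k × Fin h, z ∈ D ↔ z = (ℓ2, i2) ∨ (z.1 ≠ ℓ1 ∧ z.2 = sel z.1) := by
    intro z
    simp only [hDdef, Finset.mem_insert, Finset.mem_image, mem_erase, mem_univ, and_true]
    constructor
    · rintro (hz | ⟨ℓ, hℓ, rfl⟩)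
      · exact Or.inl hz
      · exact Or.inr ⟨hℓ, rfl⟩
    · rintro (hz | ⟨hz1, hz2⟩)
      · exact Or.inl hz
      · exact Or.inr ⟨z.1, hz1, by rw [← hz2]⟩
  set F : Finset (Fin k × Fin h) := univ \ D with hFdef
  have hFcard : F.card = k * h - k := by
    rw [hFdef, Finset.card_sdiff_of_subset (Finset.subset_univ _), hDcard]
    simp [Finset.card_univ]
  -- the injection into functions on the free coordinates
  have hinj : ∀ p ∈ (Etup d k h A).filter fun p => p ℓ1 i1 = p ℓ2 i2,
      ∀ q ∈ (Etup d k h A).filter fun p => p ℓ1 i1 = p ℓ2 i2,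
      (fun z : ↥F => p z.1.1 z.1.2) = (fun z : ↥F => q z.1.1 z.1.2) → p = q := by
    intro p hp q hq hpq
    simp only [Finset.mem_filter, Etup, mem_univ, true_and] at hp hq
    obtain ⟨hpE, hpc⟩ := hp
    obtain ⟨hqE, hqc⟩ := hq
    have hfree : ∀ ℓ i, (ℓ, i) ∉ D → p ℓ i = q ℓ i := by
      intro ℓ i hni
      have : ((ℓ, i) : Fin k × Fin h) ∈ F := by
        rw [hFdef, Finset.mem_sdiff]; exact ⟨mem_univ _, hni⟩
      exact congrFun hpq ⟨(ℓ, i), this⟩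
    -- i1 is always free
    have hi1free : (ℓ1, i1) ∉ D := by
      rw [hDmem]
      push_neg
      constructor
      · intro he
        exact hxy (by rw [Prod.ext_iff] at he ⊢; exact he)
      · intro hne; exact absurd rfl hne
    -- step 1 : the reference group agrees
    have step1 : ∀ i, p ℓ1 i = q ℓ1 i := by
      intro i
      by_cases hi : (ℓ1, i) ∈ D
      · rw [hDmem] at hi
        rcases hi with hi | ⟨hne, _⟩
        · -- then ℓ1 = ℓ2 and i = i2
          have hℓ : ℓ1 = ℓ2 := congrArg Prod.fst hi
          have hii : i = i2 := congrArg Prod.snd hi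
          subst hℓ; subst hii
          have hc : p ℓ1 i = p ℓ1 i1 := hpc.symm
          have hc' : q ℓ1 i = q ℓ1 i1 := hqc.symm
          rw [hc, hc', hfree _ _ hi1free]
        · exact absurd rfl hne
      · exact hfree _ _ hi
    have hs : gsum (p ℓ1) = gsum (q ℓ1) := by
      unfold gsum
      exact Finset.sum_congr rfl fun i _ => by rw [step1 i]
    -- step 2 : off the sum-determined coordinate, non-reference groups agree
    have step2 : ∀ ℓ, ℓ ≠ ℓ1 → ∀ i, i ≠ sel ℓ → p ℓ i = q ℓ i := by
      intro ℓ hℓ i hi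
      by_cases hmem : (ℓ, i) ∈ D
      · rw [hDmem] at hmem
        rcases hmem with hmem | ⟨_, h2'⟩
        · have hℓ2 : ℓ = ℓ2 := congrArg Prod.fst hmem
          have hii : i = i2 := congrArg Prod.snd hmem
          subst hℓ2; subst hii
          calc p ℓ i = p ℓ1 i1 := hpc.symm
          _ = q ℓ1 i1 := step1 i1
          _ = q ℓ i := hqc
        · exact absurd h2' hi
      · exact hfree _ _ hmem
    -- step 3 : the sum-determined coordinate
    have step3 : ∀ ℓ, ℓ ≠ ℓ1 → p ℓ (sel ℓ) = q ℓ (sel ℓ) := by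
      intro ℓ hℓ
      have hsum : gsum (p ℓ) = gsum (q ℓ) :=
        (hpE ℓ ℓ1).trans (hs.trans (hqE ℓ1 ℓ))
      have hpe : (∑ i ∈ univ.erase (sel ℓ), (p ℓ i : Fin d → ℕ)) + (p ℓ (sel ℓ) : Fin d → ℕ)
          = gsum (p ℓ) := Finset.sum_erase_add _ _ (mem_univ _)
      have hqe : (∑ i ∈ univ.erase (sel ℓ), (q ℓ i : Fin d → ℕ)) + (q ℓ (sel ℓ) : Fin d → ℕ)
          = gsum (q ℓ) := Finset.sum_erase_add _ _ (mem_univ _)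
      have heq : (∑ i ∈ univ.erase (sel ℓ), (p ℓ i : Fin d → ℕ))
          = ∑ i ∈ univ.erase (sel ℓ), (q ℓ i : Fin d → ℕ) :=
        Finset.sum_congr rfl fun i hi => by
          rw [step2 ℓ hℓ i (Finset.ne_of_mem_erase hi)]
      have : (∑ i ∈ univ.erase (sel ℓ), (q ℓ i : Fin d → ℕ)) + (p ℓ (sel ℓ) : Fin d → ℕ)
          = (∑ i ∈ univ.erase (sel ℓ), (q ℓ i : Fin d → ℕ)) + (q ℓ (sel ℓ) : Fin d → ℕ) := by
        have h' := hpe.trans (hsum.trans hqe.symm)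
        rw [heq] at h'
        exact h'
      exact Subtype.coe_injective (add_left_cancel this)
    funext ℓ i
    rcases eq_or_ne ℓ ℓ1 with rfl | hℓ
    · exact step1 i
    · rcases eq_or_ne i (sel ℓ) with rfl | hi
      · exact step3 ℓ hℓ
      · exact step2 ℓ hℓ i hi
  -- count via the injection
  calc ((Etup d k h A).filter fun p => p ℓ1 i1 = p ℓ2 i2).card
      ≤ (univ : Finset (↥F → ↥A)).card :=
        Finset.card_le_card_of_injOn (fun p => fun z : ↥F => p z.1.1 z.1.2)
          (fun p _ => mem_univ _) (fun p hp q hq hpq => hinj p hp q hq hpq)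
  _ = A.card ^ (k * h - k) := by
        rw [Finset.card_univ, Fintype.card_fun]
        simp [Fintype.card_coe, hFcard]

lemma Btup_card (hk : 1 ≤ k) (hh : 2 ≤ h) :
    (Btup d k h A).card ≤ (k * h) ^ 2 * A.card ^ (k * h - k) := by
  classical
  have hsub : Btup d k h A ⊆
      ((univ : Finset ((Fin k × Fin h) × (Fin k × Fin h))).filter fun z => z.1 ≠ z.2).biUnion
        (fun z => (Etup d k h A).filter fun p => p z.1.1 z.1.2 = p z.2.1 z.2.2) := by
    intro p hp
    simp only [Btup, Finset.mem_filter] at hp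
    obtain ⟨hpE, hpn⟩ := hp
    rw [Function.not_injective_iff] at hpn
    obtain ⟨a, b, hab, hne⟩ := hpn
    apply Finset.mem_biUnion.2
    exact ⟨(a, b), by simp [hne], Finset.mem_filter.2 ⟨hpE, hab⟩⟩
  calc (Btup d k h A).card ≤ _ := Finset.card_le_card hsub
  _ ≤ ∑ z ∈ ((univ : Finset ((Fin k × Fin h) × (Fin k × Fin h))).filter fun z => z.1 ≠ z.2),
        ((Etup d k h A).filter fun p => p z.1.1 z.1.2 = p z.2.1 z.2.2).card :=
      Finset.card_biUnion_le
  _ ≤ ∑ _z ∈ ((univ : Finset ((Fin k × Fin h) × (Fin k × Fin h))).filter fun z => z.1 ≠ z.2),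
        A.card ^ (k * h - k) :=
      Finset.sum_le_sum fun z hz => Bpair_card hk hh z.1 z.2 (Finset.mem_filter.1 hz).2
  _ ≤ (k * h) ^ 2 * A.card ^ (k * h - k) := by
      rw [Finset.sum_const, smul_eq_mul]
      apply Nat.mul_le_mul_right
      calc ((univ : Finset ((Fin k × Fin h) × (Fin k × Fin h))).filter fun z => z.1 ≠ z.2).card
          ≤ (univ : Finset ((Fin k × Fin h) × (Fin k × Fin h))).card :=
          Finset.card_le_card (Finset.filter_subset _ _)
      _ = (k * h) ^ 2 := by simp [Fintype.card_prod]; ring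

end Bad

section Good
variable {d k h : ℕ} {A : Finset (Fin d → ℕ)}

lemma card_le_fdkh (s : Finset (Finset (Fin d → ℕ)))
    (hs : ∀ X ∈ s, X ⊆ A ∧ IsBkhSol d k h X) : s.card ≤ fdkh d k h A := by
  classical
  have hfin : Finite {X : Finset (Fin d → ℕ) // X ⊆ A ∧ IsBkhSol d k h X} := by
    apply Finite.of_injective
      (fun T : {X : Finset (Fin d → ℕ) // X ⊆ A ∧ IsBkhSol d k h X} =>
        (⟨T.1, Finset.mem_powerset.2 T.2.1⟩ : ↥A.powerset))
    intro a b hab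
    simpa [Subtype.ext_iff] using hab
  rw [← Nat.card_eq_finsetCard]
  exact Nat.card_le_card_of_injective
    (fun X : ↥s => (⟨X.1, hs X.1 X.2⟩ : {X : Finset (Fin d → ℕ) // X ⊆ A ∧ IsBkhSol d k h X}))
    (fun a b hab => Subtype.ext (by have := congrArg Subtype.val hab; exact this))

lemma Gtup_sol (p : Fin k → Fin h → ↥A) (hp : p ∈ Gtup d k h A) :
    ((univ : Finset (Fin k × Fin h)).image fun z => (p z.1 z.2 : Fin d → ℕ)) ⊆ A ∧
    IsBkhSol d k h ((univ : Finset (Fin k × Fin h)).image fun z => (p z.1 z.2 : Fin d → ℕ)) := by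
  classical
  simp only [Gtup, Etup, Finset.mem_filter, mem_univ, true_and] at hp
  obtain ⟨hpE, hpI⟩ := hp
  have hinj : Function.Injective fun z : Fin k × Fin h => (p z.1 z.2 : Fin d → ℕ) :=
    fun a b hab => hpI (Subtype.coe_injective hab)
  constructor
  · intro a ha
    obtain ⟨z, _, rfl⟩ := Finset.mem_image.1 ha
    exact (p z.1 z.2).2
  constructor
  · rw [Finset.card_image_of_injective _ hinj]
    simp [Finset.card_univ]
  refine ⟨fun ℓ => (univ : Finset (Fin h)).image fun i => (p ℓ i : Fin d → ℕ),
    fun ℓ => ?_, fun ℓ₁ ℓ₂ hne => ?_, ?_, fun ℓ₁ ℓ₂ => ?_⟩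
  · rw [Finset.card_image_of_injective _
      (fun a b hab => by
        have := hinj (a₁ := (ℓ, a)) (a₂ := (ℓ, b)) hab
        exact congrArg Prod.snd this)]
    simp
  · rw [Finset.disjoint_left]
    intro a ha1 ha2
    obtain ⟨i, _, rfl⟩ := Finset.mem_image.1 ha1
    obtain ⟨j, _, hj⟩ := Finset.mem_image.1 ha2
    have := hinj (a₁ := (ℓ₂, j)) (a₂ := (ℓ₁, i)) hj
    exact hne (congrArg Prod.fst this).symm
  · ext a
    simp only [Finset.mem_biUnion, mem_univ, true_and, Finset.mem_image]
    constructor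
    · rintro ⟨ℓ, i, rfl⟩
      exact ⟨(ℓ, i), rfl⟩
    · rintro ⟨z, rfl⟩
      exact ⟨z.1, z.2, rfl⟩
  · have hsum : ∀ ℓ : Fin k,
        (((univ : Finset (Fin h)).image fun i => (p ℓ i : Fin d → ℕ)).sum id) = gsum (p ℓ) := by
      intro ℓ
      rw [Finset.sum_image]
      · rfl
      · intro a _ b hab hab'
        have := hinj (a₁ := (ℓ, a)) (a₂ := (ℓ, b)) hab'
        exact congrArg Prod.snd this
    rw [hsum ℓ₁, hsum ℓ₂, hpE ℓ₁ ℓ₂]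

lemma Gtup_card_le : (Gtup d k h A).card ≤ (k * h).factorial * fdkh d k h A := by
  classical
  set Φ : (Fin k → Fin h → ↥A) → Finset (Fin d → ℕ) :=
    fun p => (univ : Finset (Fin k × Fin h)).image fun z => (p z.1 z.2 : Fin d → ℕ) with hΦ
  have hfiber : ∀ X ∈ (Gtup d k h A).image Φ,
      ((Gtup d k h A).filter fun p => Φ p = X).card ≤ (k * h).factorial := by
    intro X hX
    obtain ⟨p0, hp0, rfl⟩ := Finset.mem_image.1 hX
    have hXcard : (Φ p0).card = k * h := (Gtup_sol p0 hp0).2.1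
    set fib := (Gtup d k h A).filter fun p => Φ p = Φ p0 with hfib
    -- inject the fiber into embeddings Fin k × Fin h ↪ ↥(Φ p0)
    have hmem : ∀ pp : ↥fib, ∀ z : Fin k × Fin h, ((pp.1 z.1 z.2 : Fin d → ℕ)) ∈ Φ p0 := by
      intro pp z
      have hpX := (Finset.mem_filter.1 pp.2).2
      rw [← hpX]
      exact Finset.mem_image_of_mem _ (mem_univ z)
    have hpinj : ∀ pp : ↥fib,
        Function.Injective fun z : Fin k × Fin h => pp.1 z.1 z.2 := by
      intro pp
      have := (Finset.mem_filter.1 ((Finset.mem_filter.1 pp.2).1 :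
        pp.1 ∈ Gtup d k h A)).2
      simpa [Gtup] using (Finset.mem_filter.1 (Finset.mem_filter.1 pp.2).1).2
    have hcard : fib.card ≤ Fintype.card ((Fin k × Fin h) ↪ ↥(Φ p0)) := by
      rw [← Fintype.card_coe]
      apply Fintype.card_le_of_injective
        (fun pp : ↥fib =>
          (⟨fun z => (⟨(pp.1 z.1 z.2 : Fin d → ℕ), hmem pp z⟩ : ↥(Φ p0)),
            fun z z' hzz' => hpinj pp (Subtype.coe_injective
              (Subtype.mk_eq_mk.mp hzz'))⟩ : (Fin k × Fin h) ↪ ↥(Φ p0)))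
      intro a b hab
      apply Subtype.ext
      funext ℓ i
      have h2 : ((a.1 ℓ i : Fin d → ℕ)) = ((b.1 ℓ i : Fin d → ℕ)) := by
        have := congrFun (congrArg (fun e : (Fin k × Fin h) ↪ ↥(Φ p0) => (e : (Fin k × Fin h) → ↥(Φ p0))) hab) (ℓ, i)
        exact Subtype.mk_eq_mk.mp this
      exact Subtype.coe_injective h2
    calc fib.card ≤ Fintype.card ((Fin k × Fin h) ↪ ↥(Φ p0)) := hcard
    _ = (k * h).factorial := by
        rw [Fintype.card_embedding_eq]
        simp [Fintype.card_coe, hXcard, Fintype.card_prod, Nat.descFactorial_self]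
  calc (Gtup d k h A).card ≤ (k * h).factorial * ((Gtup d k h A).image Φ).card :=
        Finset.card_le_mul_card_image _ _ hfiber
  _ ≤ (k * h).factorial * fdkh d k h A := by
        apply Nat.mul_le_mul_left
        exact card_le_fdkh _ fun X hX => by
          obtain ⟨p, hp, rfl⟩ := Finset.mem_image.1 hX
          exact Gtup_sol p hp

end Good


/-- lower bound on the number of B_{k,h}-solution sets in a not-too-small set. -/
theorem stmt6 (d k h : ℕ) (hd : 1 ≤ d) (hk : 2 ≤ k) (hh : 2 ≤ h) :
    ∃ c : ℝ, 0 < c ∧ ∃ N : ℕ, ∀ n : ℕ, N ≤ n → ∀ A : Finset (Fin d → ℕ), A ⊆ grid n d →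
      (n : ℝ) ^ (((k : ℝ) - 1) * d / k) * Real.logb 2 n ≤ (A.card : ℝ) →
      c * (A.card : ℝ) ^ (k * h) / (n : ℝ) ^ (d * (k - 1)) ≤ (fdkh d k h A : ℝ) := by
  classical
  set C0 : ℕ := 2 * (k * h) ^ 2 * h ^ (d * (k - 1)) with hC0
  have hKf : (0:ℝ) < ((k * h).factorial : ℝ) := by positivity
  have hC0two : 2 ≤ C0 := by
    have h1 : 1 ≤ h ^ (d * (k - 1)) := Nat.one_le_pow _ _ (by omega)
    have h2 : 1 ≤ (k * h) ^ 2 := Nat.one_le_pow _ _ (by positivity)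
    calc 2 = 2 * 1 * 1 := by ring
    _ ≤ 2 * (k * h) ^ 2 * h ^ (d * (k - 1)) := by
        exact Nat.mul_le_mul (Nat.mul_le_mul_left 2 h2) h1
  refine ⟨1 / (2 * ((k * h).factorial : ℝ) * (h : ℝ) ^ (d * (k - 1))), by positivity,
    2 ^ C0, ?_⟩
  intro n hn A hAg hAc
  have hn2 : 2 ≤ n := le_trans (by calc 2 = 2^1 := by norm_num
    _ ≤ 2 ^ C0 := Nat.pow_le_pow_right (by norm_num) (by omega)) hn
  have hnpos : 0 < n := by omega
  have hn1R : (1:ℝ) ≤ (n:ℝ) := by exact_mod_cast Nat.one_le_of_lt hn2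
  have hnposR : (0:ℝ) < (n:ℝ) := by positivity
  -- logarithm bound
  have hL : (C0 : ℝ) ≤ Real.logb 2 n := by
    have hb : (1:ℝ) < 2 := one_lt_two
    have hNn : ((2:ℝ)) ^ C0 ≤ (n:ℝ) := by exact_mod_cast hn
    calc (C0 : ℝ) = Real.logb 2 ((2:ℝ) ^ C0) := by
          rw [Real.logb_pow, Real.logb_self_eq_one hb]; ring
    _ ≤ Real.logb 2 n := Real.logb_le_logb_of_le hb (by positivity) hNn
  have hL1 : (1:ℝ) ≤ Real.logb 2 n := le_trans (by exact_mod_cast Nat.one_le_of_lt hC0two) hL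
  -- exponent facts
  have hkR : (2:ℝ) ≤ (k:ℝ) := by exact_mod_cast hk
  have hα : (0:ℝ) ≤ ((k:ℝ) - 1) * d / k := by
    apply div_nonneg _ (by positivity)
    apply mul_nonneg (by linarith) (by positivity)
  have hnα1 : (1:ℝ) ≤ (n:ℝ) ^ (((k:ℝ) - 1) * d / k) := Real.one_le_rpow hn1R hα
  have hA1 : (1:ℝ) ≤ (A.card : ℝ) := by
    calc (1:ℝ) = 1 * 1 := by ring
    _ ≤ (n:ℝ) ^ (((k:ℝ) - 1) * d / k) * Real.logb 2 n := by
        apply mul_le_mul hnα1 hL1 (by norm_num) (by positivity)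
    _ ≤ (A.card : ℝ) := hAc
  have hA0 : A.Nonempty := Finset.card_pos.1 (by exact_mod_cast hA1)
  have hapos : (0:ℝ) ≤ (A.card : ℝ) := by positivity
  set a : ℝ := (A.card : ℝ) with ha
  set Dq : ℝ := (((h * n : ℕ) : ℝ) ^ d) ^ (k - 1) with hDq
  have hDqeq : Dq = (h : ℝ) ^ (d * (k - 1)) * (n : ℝ) ^ (d * (k - 1)) := by
    rw [hDq]
    push_cast
    ring
  have hDqpos : (0:ℝ) < Dq := by
    rw [hDqeq]; positivity
  -- key inequality : C0 * n^(d(k-1)) ≤ a^k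
  have e1 : ((n:ℝ) ^ (((k:ℝ) - 1) * d / k)) ^ k = (n:ℝ) ^ (d * (k - 1)) := by
    rw [← Real.rpow_natCast ((n:ℝ) ^ (((k:ℝ) - 1) * d / k)) k,
      ← Real.rpow_mul (le_of_lt hnposR), div_mul_cancel₀ _ (by exact_mod_cast (by omega : k ≠ 0))]
    rw [show ((k:ℝ) - 1) * d = ((d * (k - 1) : ℕ) : ℝ) by
      push_cast [Nat.cast_sub (by omega : 1 ≤ k)]; ring]
    exact Real.rpow_natCast _ _
  have hLk : (C0 : ℝ) ≤ (Real.logb 2 n) ^ k := by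
    calc (C0 : ℝ) ≤ Real.logb 2 n := hL
    _ ≤ (Real.logb 2 n) ^ k := le_self_pow₀ hL1 (by omega)
  have hak : (C0 : ℝ) * (n:ℝ) ^ (d * (k - 1)) ≤ a ^ k := by
    calc (C0 : ℝ) * (n:ℝ) ^ (d * (k - 1))
        = (n:ℝ) ^ (d * (k - 1)) * (C0:ℝ) := by ring
    _ ≤ ((n:ℝ) ^ (((k:ℝ) - 1) * d / k)) ^ k * (Real.logb 2 n) ^ k := by
        rw [e1]
        apply mul_le_mul_of_nonneg_left hLk (by positivity)
    _ = ((n:ℝ) ^ (((k:ℝ) - 1) * d / k) * Real.logb 2 n) ^ k := (mul_pow _ _ _).symm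
    _ ≤ a ^ k := by
        apply pow_le_pow_left₀ (by positivity) hAc
  -- counting bounds
  have hH := holder_bound (n := n) (A := A) (by omega : 0 < k) (by omega : 1 ≤ h) hnpos hAg hA0
  have hBn := Btup_card (A := A) (by omega : 1 ≤ k) hh
  have hGn := Gtup_card_le (d := d) (k := k) (h := h) (A := A)
  have hEs := E_split d k h A
  -- bad tuples are at most half the main term
  have hkh : k ≤ k * h := Nat.le_mul_of_pos_right k (by omega)
  have hpowadd : a ^ (k * h - k) * a ^ k = a ^ (k * h) := by
    rw [← pow_add]
    congr 1
    omega
  have hB2 : ((Btup d k h A).card : ℝ) ≤ (1 / 2) * (a ^ (k * h) / Dq) := by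
    have hc1 : ((Btup d k h A).card : ℝ) ≤ ((k * h : ℕ) : ℝ) ^ 2 * a ^ (k * h - k) := by
      rw [ha]
      exact_mod_cast hBn
    refine le_trans hc1 ?_
    have hC0R : (C0 : ℝ) = 2 * ((k * h : ℕ) : ℝ) ^ 2 * (h : ℝ) ^ (d * (k - 1)) := by
      rw [hC0]; push_cast; ring
    have h2Dq : 2 * ((k * h : ℕ) : ℝ) ^ 2 * Dq ≤ a ^ k := by
      rw [hDqeq, ← mul_assoc]
      calc 2 * ((k * h : ℕ) : ℝ) ^ 2 * (h : ℝ) ^ (d * (k - 1)) * (n : ℝ) ^ (d * (k - 1))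
          = (C0 : ℝ) * (n:ℝ) ^ (d * (k - 1)) := by rw [hC0R]
      _ ≤ a ^ k := hak
    have hstep : ((k * h : ℕ) : ℝ) ^ 2 * a ^ (k * h - k) * (2 * Dq)
        ≤ a ^ (k * h - k) * a ^ k := by
      calc ((k * h : ℕ) : ℝ) ^ 2 * a ^ (k * h - k) * (2 * Dq)
          = a ^ (k * h - k) * (2 * ((k * h : ℕ) : ℝ) ^ 2 * Dq) := by ring
      _ ≤ a ^ (k * h - k) * a ^ k :=
          mul_le_mul_of_nonneg_left h2Dq (by positivity)
    rw [hpowadd] at hstep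
    have h2 : ((k * h : ℕ) : ℝ) ^ 2 * a ^ (k * h - k) ≤ a ^ (k * h) / (2 * Dq) := by
      rw [le_div_iff₀ (mul_pos two_pos hDqpos)]
      exact hstep
    calc ((k * h : ℕ) : ℝ) ^ 2 * a ^ (k * h - k) ≤ a ^ (k * h) / (2 * Dq) := h2
    _ = (1 / 2) * (a ^ (k * h) / Dq) := by
        rw [div_mul_eq_mul_div]
        ring
  -- combine
  have hGeq : ((Etup d k h A).card : ℝ) - ((Btup d k h A).card : ℝ)
      = ((Gtup d k h A).card : ℝ) := by
    have : ((Etup d k h A).card : ℝ)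
        = ((Gtup d k h A).card : ℝ) + ((Btup d k h A).card : ℝ) := by exact_mod_cast hEs
    linarith
  have hhk : a ^ (h * k) = a ^ (k * h) := by rw [mul_comm]
  have hmain : a ^ (k * h) / (2 * Dq * ((k * h).factorial : ℝ))
      ≤ (fdkh d k h A : ℝ) := by
    calc a ^ (k * h) / (2 * Dq * ((k * h).factorial : ℝ))
        = (a ^ (k * h) / Dq - (1 / 2) * (a ^ (k * h) / Dq)) / ((k * h).factorial : ℝ) := by
          field_simp
          ring
    _ ≤ (((Etup d k h A).card : ℝ) - ((Btup d k h A).card : ℝ)) / ((k * h).factorial : ℝ) := by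
        apply div_le_div_of_nonneg_right ?_ hKf.le
        · apply sub_le_sub ?_ hB2
          rw [← hhk]
          exact hH
    _ = ((Gtup d k h A).card : ℝ) / ((k * h).factorial : ℝ) := by rw [hGeq]
    _ ≤ (fdkh d k h A : ℝ) := by
        rw [div_le_iff₀ hKf]
        calc ((Gtup d k h A).card : ℝ) ≤ (((k * h).factorial * fdkh d k h A : ℕ) : ℝ) := by
              exact_mod_cast hGn
        _ = (fdkh d k h A : ℝ) * ((k * h).factorial : ℝ) := by push_cast; ring
  calc 1 / (2 * ((k * h).factorial : ℝ) * (h : ℝ) ^ (d * (k - 1))) * a ^ (k * h)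
        / (n : ℝ) ^ (d * (k - 1))
      = a ^ (k * h) / (2 * Dq * ((k * h).factorial : ℝ)) := by
        rw [hDqeq]
        have hhpos : (0:ℝ) < (h:ℝ) := by positivity
        field_simp
  _ ≤ (fdkh d k h A : ℝ) := hmain
end

section
/- For all integers d ≥ 1, k ≥ 2, h ≥ 2, 1 ≤ j ≤ h−1, n ≥ 1 and all disjoint subsets A₁, A₂ ⊆ [n]^d, the number of kh-tuples (x_{1,1}, ..., x_{k,h}) with x_{ℓ,i} ∈ A₁ for all 1 ≤ ℓ ≤ k, 1 ≤ i ≤ j, with x_{ℓ,i} ∈ A₂ for all 1 ≤ ℓ ≤ k, j+1 ≤ i ≤ h, with Σ_{i=1}^{h} x_{1,i} = Σ_{i=1}^{h} x_{2,i} = ⋯ = Σ_{i=1}^{h} x_{k,i}, and whose kh entries are not pairwise distinct, is at most C(kh, 2) · max{ |A₁|^{kj−1}·|A₂|^{k(h−j)−(k−1)}, |A₁|^{kj−(k−1)}·|A₂|^{k(h−j)−1} }. -/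
open Finset

private lemma card_lt_pairs (N : ℕ) :
    ((univ : Finset (Fin N × Fin N)).filter fun ab => ab.1 < ab.2).card = N.choose 2 := by
  rw [Finset.card_eq_sum_card_fiberwise (f := Prod.snd) (t := univ) (fun x _ => mem_univ _)]
  have hfib : ∀ b : Fin N,
      (((univ : Finset (Fin N × Fin N)).filter fun ab => ab.1 < ab.2).filter
        fun ab => ab.snd = b).card = (b : ℕ) := by
    intro b
    have he : (((univ : Finset (Fin N × Fin N)).filter fun ab => ab.1 < ab.2).filter
        fun ab => ab.snd = b) = (Iio b).image fun a => (a, b) := by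
      ext ⟨a, b'⟩
      simp only [mem_filter, mem_univ, true_and, mem_image, mem_Iio, Prod.mk.injEq]
      constructor
      · rintro ⟨hlt, rfl⟩; exact ⟨a, hlt, rfl, rfl⟩
      · rintro ⟨a', ha', rfl, rfl⟩; exact ⟨ha', rfl⟩
    rw [he, Finset.card_image_of_injective _ (fun a a' e => by simpa using e), Fin.card_Iio]
  rw [Finset.sum_congr rfl fun b _ => hfib b, Fin.sum_univ_eq_sum_range (fun m => m) N]
  have h2 := Finset.sum_range_id_mul_two N
  rw [Nat.choose_two_right]
  omega

private lemma card_pairs (k h : ℕ) :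
    ((univ : Finset ((Fin k × Fin h) × (Fin k × Fin h))).filter
        fun pq => finProdFinEquiv pq.1 < finProdFinEquiv pq.2).card = (k * h).choose 2 := by
  rw [← card_lt_pairs (k * h)]
  exact Finset.card_nbij' (fun pq => (finProdFinEquiv pq.1, finProdFinEquiv pq.2))
    (fun ab => (finProdFinEquiv.symm ab.1, finProdFinEquiv.symm ab.2))
    (by intro a ha; simp only [mem_filter, mem_univ, true_and] at ha ⊢
        simpa using ha)
    (by intro a ha; simp only [mem_filter, mem_univ, true_and] at ha ⊢
        simpa only [coe_filter, mem_univ, true_and, Set.mem_setOf_eq,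
          Equiv.apply_symm_apply] using ha)
    (by intro a _; simp)
    (by intro a _
        rw [Prod.ext_iff]
        exact ⟨Equiv.apply_symm_apply _ _, Equiv.apply_symm_apply _ _⟩)

private lemma card_filter_lt_fin (h j : ℕ) (hj : j < h) :
    ((univ : Finset (Fin h)).filter fun i : Fin h => (i : ℕ) < j).card = j := by
  have he : ((univ : Finset (Fin h)).filter fun i : Fin h => (i : ℕ) < j) = Iio ⟨j, hj⟩ := by
    ext i; simp [Fin.lt_def]
  rw [he, Fin.card_Iio]

private lemma id1 (k m : ℕ) (hk : 1 ≤ k) (hm : 1 ≤ m) :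
    m - 1 + m * (k - 1) = k * m - 1 := by
  obtain ⟨k, rfl⟩ : ∃ k', k = k' + 1 := ⟨k - 1, by omega⟩
  obtain ⟨m, rfl⟩ : ∃ m', m = m' + 1 := ⟨m - 1, by omega⟩
  have e : (k + 1) * (m + 1) = k * m + k + m + 1 := by ring
  rw [e]
  simp only [Nat.add_sub_cancel]
  ring

private lemma id2 (k m : ℕ) (hk : 1 ≤ k) (hm : 1 ≤ m) :
    m + (m - 1) * (k - 1) = k * m - (k - 1) := by
  obtain ⟨k, rfl⟩ : ∃ k', k = k' + 1 := ⟨k - 1, by omega⟩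
  obtain ⟨m, rfl⟩ : ∃ m', m = m' + 1 := ⟨m - 1, by omega⟩
  have e : (k + 1) * (m + 1) = k * m + m + 1 + k := by ring
  rw [e]
  simp only [Nat.add_sub_cancel]
  ring

open scoped Classical in
noncomputable def pSets {d k h : ℕ} (A₁ A₂ : Finset (Fin d → ℕ)) (j : ℕ) (c : Fin h)
    (q : Fin k × Fin h) (s : Fin k × Fin h) : Finset (Fin d → ℕ) :=
  if s = q ∨ (s.1 ≠ q.1 ∧ s.2 = c) then {0} else if (s.2 : ℕ) < j then A₁ else A₂

private lemma card_pi_sets {d k h j : ℕ} (A₁ A₂ : Finset (Fin d → ℕ))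
    (hk : 2 ≤ k) (hh : 2 ≤ h) (hj1 : 1 ≤ j) (hj2 : j ≤ h - 1)
    (q : Fin k × Fin h) (c : Fin h) (hc : (c : ℕ) = if (q.2 : ℕ) < j then h - 1 else 0) :
    (Fintype.piFinset (pSets A₁ A₂ j c q)).card ≤
      max (A₁.card ^ (k * j - 1) * A₂.card ^ (k * (h - j) - (k - 1)))
        (A₁.card ^ (k * j - (k - 1)) * A₂.card ^ (k * (h - j) - 1)) := by
  classical
  set a := A₁.card with ha
  set b := A₂.card with hb
  have hjh : j < h := by omega
  set base : Fin h → ℕ := fun i => if (i : ℕ) < j then a else b with hbase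
  have hno : ((univ : Finset (Fin h)).filter fun i : Fin h => ¬ (i : ℕ) < j).card = h - j := by
    have h0 := Finset.card_filter_add_card_filter_not
      (s := (univ : Finset (Fin h))) (p := fun i : Fin h => (i : ℕ) < j)
    rw [card_filter_lt_fin h j hjh, Finset.card_univ, Fintype.card_fin] at h0
    omega
  have eProd : ∀ i₀ : Fin h, (∏ i ∈ univ.erase i₀, base i)
      = if (i₀ : ℕ) < j then a ^ (j - 1) * b ^ (h - j) else a ^ j * b ^ (h - j - 1) := by
    intro i₀
    rw [show (∏ i ∈ univ.erase i₀, base i) =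
        ∏ i ∈ univ.erase i₀, (if (i : ℕ) < j then a else b) from rfl]
    rw [Finset.prod_ite (fun _ => a) (fun _ => b), Finset.prod_const, Finset.prod_const,
      Finset.filter_erase, Finset.filter_erase]
    by_cases hi : (i₀ : ℕ) < j
    · rw [if_pos hi]
      rw [Finset.card_erase_of_mem (by simp [hi]),
        Finset.erase_eq_of_notMem (by simp [hi]), card_filter_lt_fin h j hjh, hno]
    · rw [if_neg hi]
      rw [Finset.erase_eq_of_notMem (by simp [hi]),
        Finset.card_erase_of_mem (by simp; omega), card_filter_lt_fin h j hjh, hno]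
  have hinner : ∀ ℓ : Fin k, (∏ i : Fin h, (pSets A₁ A₂ j c q (ℓ, i)).card)
      = ∏ i ∈ univ.erase (if ℓ = q.1 then q.2 else c), base i := by
    intro ℓ
    set i₀ := if ℓ = q.1 then q.2 else c with hi₀
    have hD : ∀ i : Fin h, ((ℓ, i) = q ∨ (ℓ ≠ q.1 ∧ i = c)) ↔ i = i₀ := by
      intro i
      rw [hi₀]
      by_cases hℓ : ℓ = q.1
      · subst hℓ
        simp [Prod.ext_iff]
      · simp [Prod.ext_iff, hℓ]
    rw [← Finset.mul_prod_erase univ _ (mem_univ i₀)]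
    have h1 : (pSets A₁ A₂ j c q (ℓ, i₀)).card = 1 := by
      rw [pSets, if_pos ((hD i₀).mpr rfl)]
      simp
    rw [h1, one_mul]
    refine Finset.prod_congr rfl fun i hi => ?_
    have hine : i ≠ i₀ := (Finset.mem_erase.mp hi).1
    rw [pSets, if_neg (fun hmem => hine ((hD i).mp hmem)), apply_ite Finset.card]
  calc (Fintype.piFinset (pSets A₁ A₂ j c q)).card
      = ∏ s : Fin k × Fin h, (pSets A₁ A₂ j c q s).card := Fintype.card_piFinset _
    _ = ∏ ℓ : Fin k, ∏ i : Fin h, (pSets A₁ A₂ j c q (ℓ, i)).card :=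
        Fintype.prod_prod_type _
    _ = ∏ ℓ : Fin k, ∏ i ∈ univ.erase (if ℓ = q.1 then q.2 else c), base i :=
        Finset.prod_congr rfl (fun ℓ _ => hinner ℓ)
    _ = (∏ i ∈ univ.erase q.2, base i) * (∏ i ∈ univ.erase c, base i) ^ (k - 1) := by
        rw [← Finset.mul_prod_erase univ _ (mem_univ q.1)]
        congr 1
        · rw [if_pos rfl]
        · rw [Finset.prod_congr rfl (fun ℓ hℓ => by rw [if_neg (Finset.mem_erase.mp hℓ).1]),
            Finset.prod_const, Finset.card_erase_of_mem (mem_univ _), Finset.card_univ,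
            Fintype.card_fin]
    _ ≤ max (a ^ (k * j - 1) * b ^ (k * (h - j) - (k - 1)))
          (a ^ (k * j - (k - 1)) * b ^ (k * (h - j) - 1)) := by
        by_cases hq2 : (q.2 : ℕ) < j
        · have hc' : ¬ ((c : ℕ) < j) := by rw [hc, if_pos hq2]; omega
          rw [eProd, eProd, if_pos hq2, if_neg hc']
          have e : a ^ (j - 1) * b ^ (h - j) * (a ^ j * b ^ (h - j - 1)) ^ (k - 1)
              = a ^ ((j - 1) + j * (k - 1)) * b ^ ((h - j) + (h - j - 1) * (k - 1)) := by
            rw [pow_add, pow_add, mul_pow, pow_mul, pow_mul]; ring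
          rw [e, id1 k j (by omega) hj1, id2 k (h - j) (by omega) (by omega)]
          exact le_max_left _ _
        · have hc' : ((c : ℕ) < j) := by rw [hc, if_neg hq2]; omega
          rw [eProd, eProd, if_neg hq2, if_pos hc']
          have e : a ^ j * b ^ (h - j - 1) * (a ^ (j - 1) * b ^ (h - j)) ^ (k - 1)
              = a ^ (j + (j - 1) * (k - 1)) * b ^ ((h - j - 1) + (h - j) * (k - 1)) := by
            rw [pow_add, pow_add, mul_pow, pow_mul, pow_mul]; ring
          rw [e, id2 k j (by omega) hj1, id1 k (h - j) (by omega) (by omega)]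
          exact le_max_right _ _

def cOf (h j : ℕ) (hh : 2 ≤ h) (i₂ : Fin h) : Fin h :=
  if (i₂ : ℕ) < j then ⟨h - 1, by omega⟩ else ⟨0, by omega⟩

private lemma cOf_val (h j : ℕ) (hh : 2 ≤ h) (i₂ : Fin h) :
    (cOf h j hh i₂ : ℕ) = if (i₂ : ℕ) < j then h - 1 else 0 := by
  unfold cOf; split <;> rfl

open scoped Classical in
noncomputable def mask {d k h : ℕ} (j : ℕ) (hh : 2 ≤ h) (q : Fin k × Fin h)
    (x : Fin k → Fin h → (Fin d → ℕ)) : (Fin k × Fin h) → (Fin d → ℕ) :=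
  fun s => if s = q ∨ (s.1 ≠ q.1 ∧ s.2 = cOf h j hh q.2) then 0 else x s.1 s.2

private lemma mask_mem {d k h j : ℕ} {A₁ A₂ : Finset (Fin d → ℕ)} (hh : 2 ≤ h)
    (x : Fin k → Fin h → (Fin d → ℕ))
    (h1 : ∀ (ℓ : Fin k) (i : Fin h), (i : ℕ) < j → x ℓ i ∈ A₁) (h2 : ∀ (ℓ : Fin k) (i : Fin h), j ≤ (i : ℕ) → x ℓ i ∈ A₂)
    (q : Fin k × Fin h) :
    mask j hh q x ∈ Fintype.piFinset (pSets A₁ A₂ j (cOf h j hh q.2) q) := by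
  rw [Fintype.mem_piFinset]
  intro s
  simp only [mask, pSets]
  by_cases hD : s = q ∨ (s.1 ≠ q.1 ∧ s.2 = cOf h j hh q.2)
  · rw [if_pos hD, if_pos hD]; simp
  · rw [if_neg hD, if_neg hD]
    by_cases hs : (s.2 : ℕ) < j
    · rw [if_pos hs]; exact h1 s.1 s.2 hs
    · rw [if_neg hs]; exact h2 s.1 s.2 (not_lt.mp hs)

private lemma mask_inj {d k h j : ℕ} {A₁ A₂ : Finset (Fin d → ℕ)} (hk : 2 ≤ k) (hh : 2 ≤ h)
    (hj1 : 1 ≤ j) (hj2 : j ≤ h - 1) (hdisj : Disjoint A₁ A₂)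
    (x y : Fin k → Fin h → (Fin d → ℕ))
    (hx1 : ∀ (ℓ : Fin k) (i : Fin h), (i : ℕ) < j → x ℓ i ∈ A₁) (hx2 : ∀ (ℓ : Fin k) (i : Fin h), j ≤ (i : ℕ) → x ℓ i ∈ A₂)
    (hx3 : ∀ ℓ₁ ℓ₂ : Fin k, ∑ i, x ℓ₁ i = ∑ i, x ℓ₂ i)
    (hy1 : ∀ (ℓ : Fin k) (i : Fin h), (i : ℕ) < j → y ℓ i ∈ A₁) (hy2 : ∀ (ℓ : Fin k) (i : Fin h), j ≤ (i : ℕ) → y ℓ i ∈ A₂)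
    (hy3 : ∀ ℓ₁ ℓ₂ : Fin k, ∑ i, y ℓ₁ i = ∑ i, y ℓ₂ i)
    (p q : Fin k × Fin h) (hne : p ≠ q)
    (hxeq : x p.1 p.2 = x q.1 q.2) (hyeq : y p.1 p.2 = y q.1 q.2)
    (hm : mask j hh q x = mask j hh q y) : x = y := by
  classical
  have hfree : ∀ s : Fin k × Fin h, ¬ (s = q ∨ (s.1 ≠ q.1 ∧ s.2 = cOf h j hh q.2)) →
      x s.1 s.2 = y s.1 s.2 := by
    intro s hD
    have := congrFun hm s
    simp only [mask] at this
    rwa [if_neg hD, if_neg hD] at this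
  have hpD : ∀ z : Fin k → Fin h → (Fin d → ℕ),
      (∀ (ℓ : Fin k) (i : Fin h), (i : ℕ) < j → z ℓ i ∈ A₁) → (∀ (ℓ : Fin k) (i : Fin h), j ≤ (i : ℕ) → z ℓ i ∈ A₂) →
      z p.1 p.2 = z q.1 q.2 →
      ¬ (p = q ∨ (p.1 ≠ q.1 ∧ p.2 = cOf h j hh q.2)) := by
    intro z h1 h2 hzeq hD
    rcases hD with hE | ⟨hl, hc2⟩
    · exact hne hE
    · by_cases hq2 : (q.2 : ℕ) < j
      · have hp2 : j ≤ (p.2 : ℕ) := by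
          rw [hc2, cOf_val, if_pos hq2]; omega
        have m1 : z q.1 q.2 ∈ A₁ := h1 q.1 q.2 hq2
        have m2 : z q.1 q.2 ∈ A₂ := hzeq ▸ h2 p.1 p.2 hp2
        exact Finset.disjoint_left.mp hdisj m1 m2
      · have hp2 : (p.2 : ℕ) < j := by
          rw [hc2, cOf_val, if_neg hq2]; omega
        have m1 : z q.1 q.2 ∈ A₁ := hzeq ▸ h1 p.1 p.2 hp2
        have m2 : z q.1 q.2 ∈ A₂ := h2 q.1 q.2 (not_lt.mp hq2)
        exact Finset.disjoint_left.mp hdisj m1 m2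
  have hq : x q.1 q.2 = y q.1 q.2 := by
    rw [← hxeq, ← hyeq]
    exact hfree p (hpD x hx1 hx2 hxeq)
  have hrow : ∀ i : Fin h, x q.1 i = y q.1 i := by
    intro i
    by_cases hi : i = q.2
    · subst hi; exact hq
    · apply hfree (q.1, i)
      rintro (hE | ⟨hl, _⟩)
      · exact hi (congrArg Prod.snd hE)
      · exact hl rfl
  have hsum : ∀ ℓ : Fin k, ∑ i, x ℓ i = ∑ i, y ℓ i := by
    intro ℓ
    rw [hx3 ℓ q.1, hy3 ℓ q.1]
    exact Finset.sum_congr rfl fun i _ => hrow i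
  funext ℓ i
  by_cases hD : ((ℓ, i) : Fin k × Fin h) = q ∨ (ℓ ≠ q.1 ∧ i = cOf h j hh q.2)
  · rcases hD with hE | ⟨hl, hc2⟩
    · rw [show ℓ = q.1 from congrArg Prod.fst hE, show i = q.2 from congrArg Prod.snd hE]
      exact hq
    · subst hc2
      have hs := hsum ℓ
      have hrest : ∑ i' ∈ univ.erase (cOf h j hh q.2), x ℓ i'
          = ∑ i' ∈ univ.erase (cOf h j hh q.2), y ℓ i' := by
        refine Finset.sum_congr rfl fun i' hi' => ?_
        have hne' : i' ≠ cOf h j hh q.2 := (Finset.mem_erase.mp hi').1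
        apply hfree (ℓ, i')
        rintro (hE | ⟨_, hc⟩)
        · exact hl (congrArg Prod.fst hE)
        · exact hne' hc
      rw [← Finset.add_sum_erase univ _ (mem_univ (cOf h j hh q.2)),
        ← Finset.add_sum_erase univ (y ℓ) (mem_univ (cOf h j hh q.2)), hrest] at hs
      exact add_right_cancel hs
  · exact hfree (ℓ, i) (by
      intro hcon
      apply hD
      rcases hcon with hE | ⟨hl, hc⟩
      · exact Or.inl hE
      · exact Or.inr ⟨hl, hc⟩)

/-- number of kh-tuples with the prescribed A₁/A₂ membership pattern, equal
group sums, and entries not pairwise distinct. -/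
theorem stmt9 (d k h j n : ℕ) (hd : 1 ≤ d) (hk : 2 ≤ k) (hh : 2 ≤ h)
    (hj1 : 1 ≤ j) (hj2 : j ≤ h - 1) (hn : 1 ≤ n)
    (A₁ A₂ : Finset (Fin d → ℕ)) (hA₁ : A₁ ⊆ grid n d) (hA₂ : A₂ ⊆ grid n d)
    (hdisj : Disjoint A₁ A₂) :
    Nat.card {x : Fin k → Fin h → (Fin d → ℕ) //
        (∀ (ℓ : Fin k) (i : Fin h), (i : ℕ) < j → x ℓ i ∈ A₁) ∧
        (∀ (ℓ : Fin k) (i : Fin h), j ≤ (i : ℕ) → x ℓ i ∈ A₂) ∧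
        (∀ ℓ₁ ℓ₂ : Fin k, ∑ i, x ℓ₁ i = ∑ i, x ℓ₂ i) ∧
        ¬ Function.Injective (fun p : Fin k × Fin h => x p.1 p.2)} ≤
      (k * h).choose 2 *
        max (A₁.card ^ (k * j - 1) * A₂.card ^ (k * (h - j) - (k - 1)))
          (A₁.card ^ (k * j - (k - 1)) * A₂.card ^ (k * (h - j) - 1)) := by
  classical
  have hex : ∀ x : Fin k → Fin h → (Fin d → ℕ),
      ¬ Function.Injective (fun p : Fin k × Fin h => x p.1 p.2) →
      ∃ pq : (Fin k × Fin h) × (Fin k × Fin h),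
        finProdFinEquiv pq.1 < finProdFinEquiv pq.2 ∧ x pq.1.1 pq.1.2 = x pq.2.1 pq.2.2 := by
    intro x hni
    rw [Function.not_injective_iff] at hni
    obtain ⟨s, t, hst, hne⟩ := hni
    rcases Ne.lt_or_gt (finProdFinEquiv.injective.ne hne) with hlt | hgt
    · exact ⟨(s, t), hlt, hst⟩
    · exact ⟨(t, s), hgt, hst.symm⟩
  have hle1 : Nat.card {x : Fin k → Fin h → (Fin d → ℕ) //
        (∀ (ℓ : Fin k) (i : Fin h), (i : ℕ) < j → x ℓ i ∈ A₁) ∧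
        (∀ (ℓ : Fin k) (i : Fin h), j ≤ (i : ℕ) → x ℓ i ∈ A₂) ∧
        (∀ ℓ₁ ℓ₂ : Fin k, ∑ i, x ℓ₁ i = ∑ i, x ℓ₂ i) ∧
        ¬ Function.Injective (fun p : Fin k × Fin h => x p.1 p.2)} ≤
      (((univ : Finset ((Fin k × Fin h) × (Fin k × Fin h))).filter
          fun pq => finProdFinEquiv pq.1 < finProdFinEquiv pq.2).sigma
        fun pq => Fintype.piFinset (pSets A₁ A₂ j (cOf h j hh pq.2.2) pq.2)).card := by
    rw [← Nat.card_eq_finsetCard]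
    refine Nat.card_le_card_of_injective (fun x => ⟨⟨(hex x.1 x.2.2.2.2).choose,
        mask j hh (hex x.1 x.2.2.2.2).choose.2 x.1⟩, by
          rw [Finset.mem_sigma]
          exact ⟨Finset.mem_filter.mpr ⟨Finset.mem_univ _, (hex x.1 x.2.2.2.2).choose_spec.1⟩,
            mask_mem hh x.1 x.2.1 x.2.2.1 _⟩⟩) ?_
    intro x y hxy
    have h1 := congrArg Subtype.val hxy
    have hpq : (hex x.1 x.2.2.2.2).choose = (hex y.1 y.2.2.2.2).choose :=
      congrArg Sigma.fst h1
    have hmask : mask j hh (hex x.1 x.2.2.2.2).choose.2 x.1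
        = mask j hh (hex y.1 y.2.2.2.2).choose.2 y.1 :=
      congrArg (fun z : (_ : (Fin k × Fin h) × (Fin k × Fin h)) ×
        ((Fin k × Fin h) → (Fin d → ℕ)) => z.2) h1
    obtain ⟨hlt, hxeq⟩ := (hex x.1 x.2.2.2.2).choose_spec
    obtain ⟨hlt', hyeq⟩ := (hex y.1 y.2.2.2.2).choose_spec
    rw [← hpq] at hmask hyeq
    have hne : (hex x.1 x.2.2.2.2).choose.1 ≠ (hex x.1 x.2.2.2.2).choose.2 := by
      intro e
      rw [e] at hlt
      exact lt_irrefl _ hlt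
    exact Subtype.ext (mask_inj hk hh hj1 hj2 hdisj x.1 y.1 x.2.1 x.2.2.1 x.2.2.2.1
      y.2.1 y.2.2.1 y.2.2.2.1 _ _ hne hxeq hyeq hmask)
  have hle2 : (((univ : Finset ((Fin k × Fin h) × (Fin k × Fin h))).filter
          fun pq => finProdFinEquiv pq.1 < finProdFinEquiv pq.2).sigma
        fun pq => Fintype.piFinset (pSets A₁ A₂ j (cOf h j hh pq.2.2) pq.2)).card ≤
      (k * h).choose 2 *
        max (A₁.card ^ (k * j - 1) * A₂.card ^ (k * (h - j) - (k - 1)))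
          (A₁.card ^ (k * j - (k - 1)) * A₂.card ^ (k * (h - j) - 1)) := by
    rw [Finset.card_sigma]
    have hb := Finset.sum_le_card_nsmul
      ((univ : Finset ((Fin k × Fin h) × (Fin k × Fin h))).filter
          fun pq => finProdFinEquiv pq.1 < finProdFinEquiv pq.2)
      (fun pq => (Fintype.piFinset (pSets A₁ A₂ j (cOf h j hh pq.2.2) pq.2)).card)
      (max (A₁.card ^ (k * j - 1) * A₂.card ^ (k * (h - j) - (k - 1)))
          (A₁.card ^ (k * j - (k - 1)) * A₂.card ^ (k * (h - j) - 1)))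
      (fun pq _ => card_pi_sets A₁ A₂ hk hh hj1 hj2 pq.2 (cOf h j hh pq.2.2)
        (cOf_val h j hh pq.2.2))
    rw [smul_eq_mul, card_pairs k h] at hb
    exact hb
  exact le_trans hle1 hle2
end

section
/- For all integers d ≥ 1, k ≥ 2 and h ≥ 2, there exist a constant c > 0 and an integer N such that for all n ≥ N and every point v ∈ [n]^d all of whose coordinates are equal to 1 or to n, one has f_{[n]^d}(v) ≥ c·n^{dk(h−1)}. -/
open Finset

/-- `fAv d k h A v` is the number of distinct sets of `k*h - 1` pairwise distinct points of
`A \ {v}` which, with `v` playing the role of `x_{1,1}`, satisfy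
`v + Σ_{i=2}^h x_{1,i} = Σ_{i=1}^h x_{2,i} = ⋯ = Σ_{i=1}^h x_{k,i}`. -/
noncomputable def fAv (d k h : ℕ) (A : Finset (Fin d → ℕ)) (v : Fin d → ℕ) : ℕ :=
  Nat.card {X : Finset (Fin d → ℕ) //
    ∃ x : Fin k → Fin h → (Fin d → ℕ),
      Function.Injective (fun p : Fin k × Fin h => x p.1 p.2) ∧
      (∀ (ℓ : Fin k) (i : Fin h), (ℓ : ℕ) = 0 ∧ (i : ℕ) = 0 → x ℓ i = v) ∧
      (∀ (ℓ : Fin k) (i : Fin h), ¬((ℓ : ℕ) = 0 ∧ (i : ℕ) = 0) → x ℓ i ∈ A ∧ x ℓ i ≠ v) ∧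
      (∀ ℓ₁ ℓ₂ : Fin k, ∑ i, x ℓ₁ i = ∑ i, x ℓ₂ i) ∧
      X = Finset.image (fun p : Fin k × Fin h => x p.1 p.2)
            (Finset.univ.filter fun p : Fin k × Fin h => ¬((p.1 : ℕ) = 0 ∧ (p.2 : ℕ) = 0))}

namespace S10

lemma div_unique {M q r q' r' : ℕ} (hr : r < M) (hr' : r' < M)
    (h : M * q + r = M * q' + r') : q = q' ∧ r = r' := by
  have hM : 0 < M := by omega
  have hq : q = q' := by
    have h1 : (M * q + r) / M = q := by
      rw [Nat.mul_add_div hM, Nat.div_eq_of_lt hr, Nat.add_zero]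
    have h2 : (M * q' + r') / M = q' := by
      rw [Nat.mul_add_div hM, Nat.div_eq_of_lt hr', Nat.add_zero]
    rw [← h1, h, h2]
  subst hq
  exact ⟨rfl, Nat.add_left_cancel h⟩

def idx (k' C ℓ i : ℕ) : ℕ := C + 3 * ((k' + 1) * i + ((k' + 1) - ℓ))

lemma idx_inj {k' C ℓ i ℓ' i' : ℕ} (hℓ : ℓ ≤ k') (hℓ' : ℓ' ≤ k')
    (h : idx k' C ℓ i = idx k' C ℓ' i') : ℓ = ℓ' ∧ i = i' := by
  unfold idx at h
  have h2 : (k' + 1) * i + ((k' + 1) - ℓ) = (k' + 1) * i' + ((k' + 1) - ℓ') := by omega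
  have h3 : (k' + 1) * i + (k' - ℓ) = (k' + 1) * i' + (k' - ℓ') := by
    generalize (k' + 1) * i = a at h2 ⊢
    generalize (k' + 1) * i' = b at h2 ⊢
    omega
  have := div_unique (M := k' + 1) (by omega) (by omega) h3
  omega

lemma idx_ge {k' C ℓ i : ℕ} (hℓ : ℓ ≤ k') : C + 3 ≤ idx k' C ℓ i := by
  unfold idx
  generalize (k' + 1) * i = a
  omega

lemma idx_le {k' h' C ℓ i : ℕ} (hℓ : ℓ ≤ k') (hi : i < h')
    (hC : C = 3 * (k' + 1) * (h' + 1)) : idx k' C ℓ i + 3 ≤ 2 * C := by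
  unfold idx
  have h1 : (k' + 1) * (i + 1) = (k' + 1) * i + (k' + 1) := by ring
  have h2 : (k' + 1) * (i + 1) ≤ (k' + 1) * h' := Nat.mul_le_mul_left _ (by omega)
  have h3 : 3 * ((k' + 1) * h') + 3 ≤ C := by
    subst hC
    have : 3 * (k' + 1) * (h' + 1) = 3 * ((k' + 1) * h') + 3 * (k' + 1) := by ring
    omega
  generalize hA : (k' + 1) * i = a at *
  omega

variable (k' h' d C m : ℕ)

def fof (w : Fin (k'+1) → Fin h' → Fin d → ℕ) (ℓ : Fin (k'+1)) (i : Fin h') (j : Fin d) : ℕ :=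
  idx k' C ℓ.val i.val * m + w ℓ i j

def Sf (w : Fin (k'+1) → Fin h' → Fin d → ℕ) (ℓ : Fin (k'+1)) (j : Fin d) : ℕ :=
  ∑ i, fof k' h' d C m w ℓ i j

def off (w : Fin (k'+1) → Fin h' → Fin d → ℕ) (ℓ : Fin (k'+1)) :
    Fin (h'+1) → Fin d → ℕ :=
  Fin.cases
    (fun j => if ℓ.val = 0 then 0 else Sf k' h' d C m w 0 j - Sf k' h' d C m w ℓ j)
    (fun i j => fof k' h' d C m w ℓ i j)

def pt (v : Fin d → ℕ) (w : Fin (k'+1) → Fin h' → Fin d → ℕ)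
    (ℓ : Fin (k'+1)) (i : Fin (h'+1)) (j : Fin d) : ℕ :=
  if v j = 1 then 1 + off k' h' d C m w ℓ i j else v j - off k' h' d C m w ℓ i j

def Xset (v : Fin d → ℕ) (w : Fin (k'+1) → Fin h' → Fin d → ℕ) : Finset (Fin d → ℕ) :=
  Finset.image (fun p : Fin (k'+1) × Fin (h'+1) => pt k' h' d C m v w p.1 p.2)
    (Finset.univ.filter fun p : Fin (k'+1) × Fin (h'+1) => ¬((p.1 : ℕ) = 0 ∧ (p.2 : ℕ) = 0))

variable {k' h' d C m}
variable {w w' : Fin (k'+1) → Fin h' → Fin d → ℕ} {v : Fin d → ℕ} {n : ℕ}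

lemma off_zero (ℓ : Fin (k'+1)) (j : Fin d) :
    off k' h' d C m w ℓ 0 j =
      if ℓ.val = 0 then 0 else Sf k' h' d C m w 0 j - Sf k' h' d C m w ℓ j := by
  simp [off]

lemma off_succ (ℓ : Fin (k'+1)) (i : Fin h') (j : Fin d) :
    off k' h' d C m w ℓ i.succ j = fof k' h' d C m w ℓ i j := by
  simp [off]

section lemmas
set_option linter.unusedSectionVars false

variable (hh' : 1 ≤ h') (hC : C = 3 * (k' + 1) * (h' + 1)) (hm : 1 ≤ m)
  (hw : ∀ ℓ i j, w ℓ i j < m) (hw' : ∀ ℓ i j, w' ℓ i j < m)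

lemma Sf_eq (ℓ : Fin (k'+1)) (j : Fin d) :
    Sf k' h' d C m w ℓ j = (∑ i : Fin h', idx k' C ℓ.val i.val) * m + ∑ i, w ℓ i j := by
  unfold Sf fof
  rw [Finset.sum_add_distrib, Finset.sum_mul]

include hw in
lemma usum_le (ℓ : Fin (k'+1)) (j : Fin d) : (∑ i, w ℓ i j) + h' ≤ h' * m := by
  have h1 : ∑ i : Fin h', (w ℓ i j + 1) ≤ ∑ _i : Fin h', m :=
    Finset.sum_le_sum (fun i _ => hw ℓ i j)
  rw [Finset.sum_add_distrib, Finset.sum_const, Finset.sum_const] at h1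
  simpa [mul_comm] using h1

lemma Sidx_diff (ℓ : Fin (k'+1)) :
    ∑ i : Fin h', idx k' C 0 i.val = (∑ i : Fin h', idx k' C ℓ.val i.val) + h' * (3 * ℓ.val) := by
  have h1 : ∀ i : Fin h', idx k' C 0 i.val = idx k' C ℓ.val i.val + 3 * ℓ.val := by
    intro i
    unfold idx
    generalize (k' + 1) * i.val = a
    have := ℓ.isLt
    omega
  calc ∑ i : Fin h', idx k' C 0 i.val = ∑ i : Fin h', (idx k' C ℓ.val i.val + 3 * ℓ.val) :=
        Finset.sum_congr rfl (fun i _ => h1 i)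
    _ = (∑ i : Fin h', idx k' C ℓ.val i.val) + h' * (3 * ℓ.val) := by
        rw [Finset.sum_add_distrib, Finset.sum_const, Finset.card_univ, Fintype.card_fin,
          smul_eq_mul]

include hh' hm hw in
lemma Uoff_facts (ℓ : Fin (k'+1)) (j : Fin d) (hℓ : ℓ.val ≠ 0) :
    Sf k' h' d C m w ℓ j ≤ Sf k' h' d C m w 0 j ∧
    Sf k' h' d C m w 0 j - Sf k' h' d C m w ℓ j ≤ h' * (3 * ℓ.val) * m + h' * m ∧
    h' * (3 * ℓ.val) * m ≤ (Sf k' h' d C m w 0 j - Sf k' h' d C m w ℓ j) + h' * m ∧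
    m ≤ Sf k' h' d C m w 0 j - Sf k' h' d C m w ℓ j := by
  have e0 := Sf_eq (C := C) (m := m) (w := w) (ℓ := 0) (j := j)
  simp only [Fin.val_zero] at e0
  have el := Sf_eq (C := C) (m := m) (w := w) (ℓ := ℓ) (j := j)
  have ed := Sidx_diff (h' := h') (C := C) ℓ
  have hA0 := usum_le hw 0 j
  have hAl := usum_le hw ℓ j
  have key : Sf k' h' d C m w 0 j + ∑ i, w ℓ i j
      = Sf k' h' d C m w ℓ j + h' * (3 * ℓ.val) * m + ∑ i, w 0 i j := by
    rw [e0, el, ed, add_mul]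
    ring
  have h1 : h' * 3 ≤ h' * (3 * ℓ.val) := Nat.mul_le_mul_left _ (by omega)
  have hP3 : h' * 3 * m ≤ h' * (3 * ℓ.val) * m := Nat.mul_le_mul_right _ h1
  have he : h' * 3 * m = 3 * (h' * m) := by ring
  rw [he] at hP3
  have hhm : m ≤ h' * m := Nat.le_mul_of_pos_left m (by omega)
  omega

include hh' hC hm hw in
lemma Uoff_lt_Cm (ℓ : Fin (k'+1)) (j : Fin d) (hℓ : ℓ.val ≠ 0) :
    Sf k' h' d C m w 0 j - Sf k' h' d C m w ℓ j < C * m := by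
  have hf := Uoff_facts (C := C) hh' hm hw ℓ j hℓ
  have h1 : h' * (3 * ℓ.val) ≤ h' * (3 * k') :=
    Nat.mul_le_mul_left _ (by have := ℓ.isLt; omega)
  have h2 : h' * (3 * ℓ.val) * m ≤ h' * (3 * k') * m := Nat.mul_le_mul_right _ h1
  have h3 : h' * (3 * k') + h' + 1 ≤ C := by
    subst hC
    have e : 3 * (k' + 1) * (h' + 1) = h' * (3 * k') + 3 * k' + 3 * h' + 3 := by ring
    omega
  have h4 : (h' * (3 * k') + h' + 1) * m ≤ C * m := Nat.mul_le_mul_right _ h3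
  have h5 : (h' * (3 * k') + h' + 1) * m = h' * (3 * k') * m + h' * m + m := by ring
  omega

include hh' hC hm hw in
lemma off_det_lt (ℓ : Fin (k'+1)) (j : Fin d) : off k' h' d C m w ℓ 0 j < C * m := by
  rw [off_zero]
  by_cases h : ℓ.val = 0
  · simp only [h, if_pos]
    have hC1 : 0 < C := by subst hC; positivity
    have := Nat.mul_le_mul hC1 hm
    omega
  · rw [if_neg h]
    exact Uoff_lt_Cm hh' hC hm hw ℓ j h

include hw in
lemma off_free_ge (ℓ : Fin (k'+1)) (i : Fin h') (j : Fin d) :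
    (C + 3) * m ≤ off k' h' d C m w ℓ i.succ j := by
  rw [off_succ]
  unfold fof
  have h1 : C + 3 ≤ idx k' C ℓ.val i.val := idx_ge (by have := ℓ.isLt; omega)
  have := Nat.mul_le_mul_right m h1
  omega

include hh' hC hm hw in
lemma off_lt (ℓ : Fin (k'+1)) (i : Fin (h'+1)) (j : Fin d) :
    off k' h' d C m w ℓ i j < 2 * C * m := by
  induction i using Fin.cases with
  | zero =>
    have := off_det_lt hh' hC hm hw (w := w) ℓ j
    have h2 : C * m ≤ 2 * C * m := by
      have : C ≤ 2 * C := by omega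
      exact Nat.mul_le_mul_right _ this
    omega
  | succ i =>
    rw [off_succ]
    unfold fof
    have h0 : idx k' C ℓ.val i.val + 3 ≤ 2 * C := idx_le (by have := ℓ.isLt; omega) i.isLt hC
    have h1 : idx k' C ℓ.val i.val + 1 ≤ 2 * C := by omega
    have h2 : (idx k' C ℓ.val i.val + 1) * m ≤ 2 * C * m := Nat.mul_le_mul_right _ h1
    have h3 : (idx k' C ℓ.val i.val + 1) * m = idx k' C ℓ.val i.val * m + m := by ring
    have := hw ℓ i j
    omega

include hh' hm hw in
lemma off_pos (ℓ : Fin (k'+1)) (i : Fin (h'+1)) (j : Fin d)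
    (hnz : ¬(ℓ.val = 0 ∧ i.val = 0)) : 1 ≤ off k' h' d C m w ℓ i j := by
  induction i using Fin.cases with
  | zero =>
    have hℓ : ℓ.val ≠ 0 := by simpa using hnz
    rw [off_zero, if_neg hℓ]
    have := (Uoff_facts (C := C) hh' hm hw ℓ j hℓ).2.2.2
    omega
  | succ i =>
    have := off_free_ge hw (C := C) ℓ i j
    have h2 : 1 ≤ (C + 3) * m := by
      have : 1 * 1 ≤ (C + 3) * m := Nat.mul_le_mul (by omega) hm
      omega
    omega

include hh' hC hm hw hw' in
lemma off_slot_inj {ℓ ℓ' : Fin (k'+1)} {i i' : Fin (h'+1)} {j : Fin d}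
    (h : off k' h' d C m w ℓ i j = off k' h' d C m w' ℓ' i' j) : ℓ = ℓ' ∧ i = i' := by
  induction i using Fin.cases with
  | zero =>
    induction i' using Fin.cases with
    | zero =>
      refine ⟨?_, rfl⟩
      rw [off_zero, off_zero] at h
      by_cases h0 : ℓ.val = 0 <;> by_cases h0' : ℓ'.val = 0
      · exact Fin.ext (by omega)
      · rw [if_pos h0, if_neg h0'] at h
        have := (Uoff_facts (C := C) hh' hm hw' ℓ' j h0').2.2.2
        omega
      · rw [if_neg h0, if_pos h0'] at h
        have := (Uoff_facts (C := C) hh' hm hw ℓ j h0).2.2.2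
        omega
      · rw [if_neg h0, if_neg h0'] at h
        -- both determined: regions separated
        have hfw := Uoff_facts (C := C) hh' hm hw ℓ j h0
        have hfw' := Uoff_facts (C := C) hh' hm hw' ℓ' j h0'
        by_contra hne
        have hne' : ℓ.val ≠ ℓ'.val := fun he => hne (Fin.ext he)
        have hhm : m ≤ h' * m := Nat.le_mul_of_pos_left m (by omega)
        rcases Nat.lt_or_ge ℓ.val ℓ'.val with hlt | hge
        · have hsep : h' * (3 * ℓ.val) * m + 3 * (h' * m) ≤ h' * (3 * ℓ'.val) * m := by
            have e1 : h' * (3 * ℓ.val) * m + 3 * (h' * m) = h' * (3 * ℓ.val + 3) * m := by ring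
            rw [e1]
            exact Nat.mul_le_mul_right _ (Nat.mul_le_mul_left _ (by omega))
          omega
        · have hlt' : ℓ'.val < ℓ.val := by omega
          have hsep : h' * (3 * ℓ'.val) * m + 3 * (h' * m) ≤ h' * (3 * ℓ.val) * m := by
            have e1 : h' * (3 * ℓ'.val) * m + 3 * (h' * m) = h' * (3 * ℓ'.val + 3) * m := by ring
            rw [e1]
            exact Nat.mul_le_mul_right _ (Nat.mul_le_mul_left _ (by omega))
          omega
    | succ i' =>
      exfalso
      have h1 := off_det_lt hh' hC hm hw (w := w) ℓ j
      have h2 := off_free_ge hw' (C := C) ℓ' i' j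
      have h3 : C * m ≤ (C + 3) * m := Nat.mul_le_mul_right _ (by omega)
      omega
  | succ i =>
    induction i' using Fin.cases with
    | zero =>
      exfalso
      have h1 := off_det_lt hh' hC hm hw' (w := w') ℓ' j
      have h2 := off_free_ge hw (C := C) ℓ i j
      have h3 : C * m ≤ (C + 3) * m := Nat.mul_le_mul_right _ (by omega)
      omega
    | succ i' =>
      rw [off_succ, off_succ] at h
      unfold fof at h
      rw [mul_comm (idx k' C ℓ.val i.val) m, mul_comm (idx k' C ℓ'.val i'.val) m] at h
      have hd := div_unique (hw ℓ i j) (hw' ℓ' i' j) h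
      have hidx := idx_inj (by have := ℓ.isLt; omega) (by have := ℓ'.isLt; omega) hd.1
      exact ⟨Fin.ext hidx.1, by rw [Fin.ext_iff]; simp [hidx.2]⟩

lemma off_free_val {ℓ : Fin (k'+1)} {i : Fin h'} {j : Fin d}
    (h : off k' h' d C m w ℓ i.succ j = off k' h' d C m w' ℓ i.succ j) :
    w ℓ i j = w' ℓ i j := by
  rw [off_succ, off_succ] at h
  unfold fof at h
  exact Nat.add_left_cancel h

include hh' hC hm hw in
lemma off_lt_n (hn : (2*C+2)*m ≤ n) (ℓ : Fin (k'+1)) (i : Fin (h'+1)) (j : Fin d) :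
    off k' h' d C m w ℓ i j < n := by
  have h1 := off_lt hh' hC hm hw ℓ i j
  have h2 : 2*C*m + 2*m ≤ n := by
    have e : (2*C+2)*m = 2*C*m + 2*m := by ring
    omega
  omega

lemma pt_off_inj {ℓ ℓ' : Fin (k'+1)} {i i' : Fin (h'+1)} {j : Fin d}
    (hvj : v j = 1 ∨ v j = n)
    (ha : off k' h' d C m w ℓ i j < n) (hb : off k' h' d C m w' ℓ' i' j < n)
    (h : pt k' h' d C m v w ℓ i j = pt k' h' d C m v w' ℓ' i' j) :
    off k' h' d C m w ℓ i j = off k' h' d C m w' ℓ' i' j := by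
  unfold pt at h
  by_cases h1 : v j = 1
  · rw [if_pos h1, if_pos h1] at h
    omega
  · rw [if_neg h1, if_neg h1] at h
    have hvn : v j = n := hvj.resolve_left h1
    omega

lemma pt_zero : pt k' h' d C m v w 0 0 = v := by
  funext j
  unfold pt
  have h0 : off k' h' d C m w 0 0 j = 0 := by rw [off_zero]; simp
  rw [h0]
  by_cases h1 : v j = 1 <;> simp [h1]

include hh' hC hm hw in
lemma pt_mem_grid (hn : (2*C+2)*m ≤ n) (hvj : ∀ j, v j = 1 ∨ v j = n)
    (ℓ : Fin (k'+1)) (i : Fin (h'+1)) : pt k' h' d C m v w ℓ i ∈ grid n d := by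
  rw [grid, Fintype.mem_piFinset]
  intro j
  rw [Finset.mem_Icc]
  have h1 := off_lt_n hh' hC hm hw hn ℓ i j
  unfold pt
  by_cases hv1 : v j = 1
  · rw [if_pos hv1]
    omega
  · rw [if_neg hv1]
    have hvn : v j = n := (hvj j).resolve_left hv1
    omega

include hh' hC hm hw in
lemma pt_ne_v (hd : 0 < d) (hn : (2*C+2)*m ≤ n) (hvj : ∀ j, v j = 1 ∨ v j = n)
    (ℓ : Fin (k'+1)) (i : Fin (h'+1)) (hnz : ¬(ℓ.val = 0 ∧ i.val = 0)) :
    pt k' h' d C m v w ℓ i ≠ v := by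
  intro he
  have h1 := congrFun he (⟨0, hd⟩ : Fin d)
  have h2 := off_pos (C := C) hh' hm hw ℓ i (⟨0, hd⟩ : Fin d) hnz
  have h3 := off_lt_n hh' hC hm hw hn ℓ i (⟨0, hd⟩ : Fin d)
  unfold pt at h1
  by_cases hv1 : v (⟨0, hd⟩ : Fin d) = 1
  · rw [if_pos hv1, hv1] at h1
    omega
  · rw [if_neg hv1] at h1
    have hvn := (hvj (⟨0, hd⟩ : Fin d)).resolve_left hv1
    omega

include hh' hm hw in
lemma sum_off (ℓ : Fin (k'+1)) (j : Fin d) :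
    ∑ i : Fin (h'+1), off k' h' d C m w ℓ i j = Sf k' h' d C m w 0 j := by
  rw [Fin.sum_univ_succ]
  have hsucc : ∑ i : Fin h', off k' h' d C m w ℓ i.succ j = Sf k' h' d C m w ℓ j := by
    unfold Sf
    exact Finset.sum_congr rfl (fun i _ => off_succ ℓ i j)
  rw [hsucc, off_zero]
  by_cases h0 : ℓ.val = 0
  · have hz : ℓ = 0 := Fin.ext h0
    subst hz
    simp
  · rw [if_neg h0]
    have := (Uoff_facts (C := C) hh' hm hw ℓ j h0).1
    omega

include hh' hC hm hw in
lemma sum_pt_eq (hn : (2*C+2)*m ≤ n) (hvj : ∀ j, v j = 1 ∨ v j = n)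
    (ℓ₁ ℓ₂ : Fin (k'+1)) (j : Fin d) :
    ∑ i : Fin (h'+1), pt k' h' d C m v w ℓ₁ i j
      = ∑ i : Fin (h'+1), pt k' h' d C m v w ℓ₂ i j := by
  by_cases hv1 : v j = 1
  · have key : ∀ ℓ : Fin (k'+1), ∑ i : Fin (h'+1), pt k' h' d C m v w ℓ i j
        = (h'+1) + Sf k' h' d C m w 0 j := by
      intro ℓ
      have he : ∀ i : Fin (h'+1), pt k' h' d C m v w ℓ i j = 1 + off k' h' d C m w ℓ i j := by
        intro i
        unfold pt
        rw [if_pos hv1]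
      rw [Finset.sum_congr rfl (fun i _ => he i), Finset.sum_add_distrib, Finset.sum_const,
        Finset.card_univ, Fintype.card_fin, sum_off hh' hm hw ℓ j, smul_eq_mul, mul_one]
    rw [key ℓ₁, key ℓ₂]
  · have hvn : v j = n := (hvj j).resolve_left hv1
    have key : ∀ ℓ : Fin (k'+1), (∑ i : Fin (h'+1), pt k' h' d C m v w ℓ i j)
        + Sf k' h' d C m w 0 j = (h'+1) * n := by
      intro ℓ
      have h1 : ∀ i : Fin (h'+1),
          pt k' h' d C m v w ℓ i j + off k' h' d C m w ℓ i j = n := by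
        intro i
        have := off_lt_n hh' hC hm hw hn ℓ i j
        unfold pt
        rw [if_neg hv1, hvn]
        omega
      calc (∑ i : Fin (h'+1), pt k' h' d C m v w ℓ i j) + Sf k' h' d C m w 0 j
          = (∑ i : Fin (h'+1), pt k' h' d C m v w ℓ i j)
            + ∑ i : Fin (h'+1), off k' h' d C m w ℓ i j := by rw [sum_off hh' hm hw ℓ j]
        _ = ∑ i : Fin (h'+1), (pt k' h' d C m v w ℓ i j + off k' h' d C m w ℓ i j) :=
            (Finset.sum_add_distrib).symm
        _ = ∑ _i : Fin (h'+1), n := Finset.sum_congr rfl (fun i _ => h1 i)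
        _ = (h'+1) * n := by
            rw [Finset.sum_const, Finset.card_univ, Fintype.card_fin, smul_eq_mul]
    have k1 := key ℓ₁
    have k2 := key ℓ₂
    omega

include hh' hC hm hw in
lemma Xset_spec (hd : 0 < d) (hn : (2*C+2)*m ≤ n) (hvj : ∀ j, v j = 1 ∨ v j = n) :
    ∃ x : Fin (k'+1) → Fin (h'+1) → (Fin d → ℕ),
      Function.Injective (fun p : Fin (k'+1) × Fin (h'+1) => x p.1 p.2) ∧
      (∀ (ℓ : Fin (k'+1)) (i : Fin (h'+1)), (ℓ : ℕ) = 0 ∧ (i : ℕ) = 0 → x ℓ i = v) ∧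
      (∀ (ℓ : Fin (k'+1)) (i : Fin (h'+1)), ¬((ℓ : ℕ) = 0 ∧ (i : ℕ) = 0) →
        x ℓ i ∈ grid n d ∧ x ℓ i ≠ v) ∧
      (∀ ℓ₁ ℓ₂ : Fin (k'+1), ∑ i, x ℓ₁ i = ∑ i, x ℓ₂ i) ∧
      Xset k' h' d C m v w = Finset.image (fun p : Fin (k'+1) × Fin (h'+1) => x p.1 p.2)
        (Finset.univ.filter fun p : Fin (k'+1) × Fin (h'+1) =>
          ¬((p.1 : ℕ) = 0 ∧ (p.2 : ℕ) = 0)) := by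
  refine ⟨pt k' h' d C m v w, ?_, ?_, ?_, ?_, rfl⟩
  · intro p q hpq
    have hoff : ∀ j, off k' h' d C m w p.1 p.2 j = off k' h' d C m w q.1 q.2 j := fun j =>
      pt_off_inj (hvj j) (off_lt_n hh' hC hm hw hn p.1 p.2 j)
        (off_lt_n hh' hC hm hw hn q.1 q.2 j) (congrFun hpq j)
    have := off_slot_inj hh' hC hm hw hw (hoff ⟨0, hd⟩)
    exact Prod.ext this.1 this.2
  · intro ℓ i h
    have hℓ : ℓ = 0 := Fin.ext h.1
    have hi : i = 0 := Fin.ext h.2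
    subst hℓ; subst hi
    exact pt_zero
  · intro ℓ i h
    exact ⟨pt_mem_grid hh' hC hm hw hn hvj ℓ i, pt_ne_v hh' hC hm hw hd hn hvj ℓ i h⟩
  · intro ℓ₁ ℓ₂
    funext j
    rw [Finset.sum_apply, Finset.sum_apply]
    exact sum_pt_eq hh' hC hm hw hn hvj ℓ₁ ℓ₂ j

include hh' hC hm hw hw' in
lemma Xset_inj (hd : 0 < d) (hn : (2*C+2)*m ≤ n) (hvj : ∀ j, v j = 1 ∨ v j = n)
    (h : Xset k' h' d C m v w = Xset k' h' d C m v w') :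
    ∀ ℓ i j, w ℓ i j = w' ℓ i j := by
  intro ℓ i j
  have hmem : pt k' h' d C m v w ℓ i.succ ∈ Xset k' h' d C m v w' := by
    rw [← h]
    unfold Xset
    refine Finset.mem_image_of_mem (fun p : Fin (k'+1) × Fin (h'+1) => pt k' h' d C m v w p.1 p.2)
      (Finset.mem_filter.mpr ⟨Finset.mem_univ (ℓ, i.succ), ?_⟩)
    simp
  unfold Xset at hmem
  obtain ⟨p, hp, hpe⟩ := Finset.mem_image.mp hmem
  have hoff : ∀ j', off k' h' d C m w' p.1 p.2 j' = off k' h' d C m w ℓ i.succ j' := fun j' =>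
    pt_off_inj (hvj j') (off_lt_n hh' hC hm hw' hn p.1 p.2 j')
      (off_lt_n hh' hC hm hw hn ℓ i.succ j') (congrFun hpe j')
  obtain ⟨hℓ, hi⟩ := off_slot_inj hh' hC hm hw' hw (hoff ⟨0, hd⟩)
  have hpeq : p = (ℓ, i.succ) := Prod.ext hℓ hi
  subst hpeq
  exact (off_free_val (hoff j)).symm

end lemmas

lemma card_le_fAv {d k h : ℕ} (A : Finset (Fin d → ℕ)) (v : Fin d → ℕ)
    {α : Type} [Fintype α] (F : α → Finset (Fin d → ℕ))
    (hinj : Function.Injective F)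
    (hF : ∀ a, ∃ x : Fin k → Fin h → (Fin d → ℕ),
      Function.Injective (fun p : Fin k × Fin h => x p.1 p.2) ∧
      (∀ (ℓ : Fin k) (i : Fin h), (ℓ : ℕ) = 0 ∧ (i : ℕ) = 0 → x ℓ i = v) ∧
      (∀ (ℓ : Fin k) (i : Fin h), ¬((ℓ : ℕ) = 0 ∧ (i : ℕ) = 0) → x ℓ i ∈ A ∧ x ℓ i ≠ v) ∧
      (∀ ℓ₁ ℓ₂ : Fin k, ∑ i, x ℓ₁ i = ∑ i, x ℓ₂ i) ∧
      F a = Finset.image (fun p : Fin k × Fin h => x p.1 p.2)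
            (Finset.univ.filter fun p : Fin k × Fin h => ¬((p.1 : ℕ) = 0 ∧ (p.2 : ℕ) = 0))) :
    Fintype.card α ≤ fAv d k h A v := by
  classical
  have hsub : ∀ X : {X : Finset (Fin d → ℕ) //
      ∃ x : Fin k → Fin h → (Fin d → ℕ),
      Function.Injective (fun p : Fin k × Fin h => x p.1 p.2) ∧
      (∀ (ℓ : Fin k) (i : Fin h), (ℓ : ℕ) = 0 ∧ (i : ℕ) = 0 → x ℓ i = v) ∧
      (∀ (ℓ : Fin k) (i : Fin h), ¬((ℓ : ℕ) = 0 ∧ (i : ℕ) = 0) → x ℓ i ∈ A ∧ x ℓ i ≠ v) ∧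
      (∀ ℓ₁ ℓ₂ : Fin k, ∑ i, x ℓ₁ i = ∑ i, x ℓ₂ i) ∧
      X = Finset.image (fun p : Fin k × Fin h => x p.1 p.2)
            (Finset.univ.filter fun p : Fin k × Fin h => ¬((p.1 : ℕ) = 0 ∧ (p.2 : ℕ) = 0))},
      X.1 ⊆ A := by
    rintro ⟨X, x, hx1, hx2, hx3, hx4, hx5⟩ y hy
    simp only at hy
    rw [hx5] at hy
    obtain ⟨p, hp, rfl⟩ := Finset.mem_image.mp hy
    exact (hx3 p.1 p.2 (by simpa using (Finset.mem_filter.mp hp).2)).1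
  haveI hfin : Finite {X : Finset (Fin d → ℕ) //
      ∃ x : Fin k → Fin h → (Fin d → ℕ),
      Function.Injective (fun p : Fin k × Fin h => x p.1 p.2) ∧
      (∀ (ℓ : Fin k) (i : Fin h), (ℓ : ℕ) = 0 ∧ (i : ℕ) = 0 → x ℓ i = v) ∧
      (∀ (ℓ : Fin k) (i : Fin h), ¬((ℓ : ℕ) = 0 ∧ (i : ℕ) = 0) → x ℓ i ∈ A ∧ x ℓ i ≠ v) ∧
      (∀ ℓ₁ ℓ₂ : Fin k, ∑ i, x ℓ₁ i = ∑ i, x ℓ₂ i) ∧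
      X = Finset.image (fun p : Fin k × Fin h => x p.1 p.2)
            (Finset.univ.filter fun p : Fin k × Fin h => ¬((p.1 : ℕ) = 0 ∧ (p.2 : ℕ) = 0))} := by
    refine Finite.of_injective
      (fun X => (⟨X.1, Finset.mem_powerset.mpr (hsub X)⟩ : ↥A.powerset)) ?_
    intro X Y hXY
    exact Subtype.ext (by simpa using congrArg Subtype.val hXY)
  have h1 := Nat.card_le_card_of_injective
    (fun a : α => (⟨F a, hF a⟩ : {X : Finset (Fin d → ℕ) //
      ∃ x : Fin k → Fin h → (Fin d → ℕ),
      Function.Injective (fun p : Fin k × Fin h => x p.1 p.2) ∧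
      (∀ (ℓ : Fin k) (i : Fin h), (ℓ : ℕ) = 0 ∧ (i : ℕ) = 0 → x ℓ i = v) ∧
      (∀ (ℓ : Fin k) (i : Fin h), ¬((ℓ : ℕ) = 0 ∧ (i : ℕ) = 0) → x ℓ i ∈ A ∧ x ℓ i ≠ v) ∧
      (∀ ℓ₁ ℓ₂ : Fin k, ∑ i, x ℓ₁ i = ∑ i, x ℓ₂ i) ∧
      X = Finset.image (fun p : Fin k × Fin h => x p.1 p.2)
            (Finset.univ.filter fun p : Fin k × Fin h => ¬((p.1 : ℕ) = 0 ∧ (p.2 : ℕ) = 0))}))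
    (fun a b hab => hinj (by simpa using congrArg Subtype.val hab))
  rw [Nat.card_eq_fintype_card] at h1
  exact h1

end S10

/-- lower bound on `f_{[n]^d}(v)` for corner points `v`. -/
theorem stmt10 (d k h : ℕ) (hd : 1 ≤ d) (hk : 2 ≤ k) (hh : 2 ≤ h) :
    ∃ c : ℝ, 0 < c ∧ ∃ N : ℕ, ∀ n : ℕ, N ≤ n →
      ∀ v : Fin d → ℕ, v ∈ grid n d → (∀ j : Fin d, v j = 1 ∨ v j = n) →
      c * (n : ℝ) ^ (d * k * (h - 1)) ≤ (fAv d k h (grid n d) v : ℝ) := by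
  obtain ⟨k', rfl⟩ : ∃ k', k = k' + 1 := ⟨k - 1, by omega⟩
  obtain ⟨h', rfl⟩ : ∃ h', h = h' + 1 := ⟨h - 1, by omega⟩
  have hh' : 1 ≤ h' := by omega
  set C : ℕ := 3 * (k' + 1) * (h' + 1) with hC
  set Q : ℕ := 2 * C + 2 with hQdef
  set E : ℕ := d * (k' + 1) * h' with hE
  have hQ0 : 0 < Q := by
    have : 0 < C := by rw [hC]; positivity
    omega
  refine ⟨(2 * (Q : ℝ))⁻¹ ^ E, by positivity, 2 * Q, ?_⟩
  intro n hn v hvg hvj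
  set m : ℕ := n / Q with hmdef
  have hm1 : 1 ≤ m := (Nat.one_le_div_iff hQ0).mpr (by omega)
  have hQm : Q * m ≤ n := by rw [hmdef, mul_comm]; exact Nat.div_mul_le_self n Q
  have hn2 : n ≤ 2 * (Q * m) := by
    have h1 := Nat.div_add_mod n Q
    have h2 : n % Q < Q := Nat.mod_lt _ hQ0
    have h3 : Q * 1 ≤ Q * m := Nat.mul_le_mul_left _ hm1
    rw [← hmdef] at h1
    omega
  have hnC : (2 * C + 2) * m ≤ n := by rw [← hQdef]; exact hQm
  -- counting
  have hcardT : Fintype.card (Fin (k' + 1) → Fin h' → Fin d → Fin m) = m ^ E := by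
    simp only [Fintype.card_fun, Fintype.card_fin, ← pow_mul]
    rw [hE]
    congr 1
    ring
  have hkey : m ^ E ≤ fAv d (k' + 1) (h' + 1) (grid n d) v := by
    rw [← hcardT]
    refine S10.card_le_fAv (grid n d) v
      (fun u => S10.Xset k' h' d C m v (fun ℓ i j => (u ℓ i j : ℕ))) ?_ ?_
    · intro u u' huu
      have := S10.Xset_inj hh' hC hm1 (fun ℓ i j => (u ℓ i j).isLt)
        (fun ℓ i j => (u' ℓ i j).isLt) hd hnC hvj huu
      funext ℓ i j
      exact Fin.val_injective (this ℓ i j)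
    · intro u
      exact S10.Xset_spec hh' hC hm1 (fun ℓ i j => (u ℓ i j).isLt) hd hnC hvj
  -- real arithmetic
  have hEgoal : d * (k' + 1) * (h' + 1 - 1) = E := by rw [hE, Nat.add_sub_cancel]
  rw [hEgoal]
  have hcast : (n : ℝ) ≤ 2 * (Q : ℝ) * (m : ℝ) := by
    have h4 : ((n : ℕ) : ℝ) ≤ ((2 * (Q * m) : ℕ) : ℝ) := Nat.cast_le.mpr hn2
    push_cast at h4 ⊢
    linarith
  have hQR : (0 : ℝ) < 2 * (Q : ℝ) := by positivity
  calc (2 * (Q : ℝ))⁻¹ ^ E * (n : ℝ) ^ E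
      ≤ (2 * (Q : ℝ))⁻¹ ^ E * (2 * (Q : ℝ) * (m : ℝ)) ^ E := by
        apply mul_le_mul_of_nonneg_left (pow_le_pow_left₀ (by positivity) hcast E) (by positivity)
    _ = (m : ℝ) ^ E := by
        rw [← mul_pow]
        congr 1
        field_simp
    _ ≤ (fAv d (k' + 1) (h' + 1) (grid n d) v : ℝ) := by exact_mod_cast hkey
end

section
/- For all integers d ≥ 1, k ≥ 2 and h ≥ 2, there exist a constant c > 0, a constant δ > 0 and an integer N such that for all n ≥ N, every subset A ⊆ [n]^d with |A| ≥ (1−δ)·n^d, and every point v ∈ A, one has f_A(v) ≥ c·n^{dk(h−1)}. -/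
/-!
Write `h = m + 1` and fix `v`. A solution with `x₁,₁ = v` is determined by its `k * m` entries
`x_{ℓ,i}`, `i ≥ 2`: the first entry of row `ℓ` is then forced to be
`v + Σᵢ x_{1,i+1} - Σᵢ x_{ℓ,i+1}`. Let these free entries range over boxes of side
`b ≈ n / (3h)`, those of the first row translated according to `v` so that every forced entry
stays in `[n]^d`; this gives `b^{dkm} ≍ n^{dk(h-1)}` parameter tuples. A tuple is bad if one of
its points misses `A` or two of its points coincide. In either case one free entry is determined
by the others (and, for a missing point, by the point of `[n]^d \ A` it hits), so there are at most
`(kh |[n]^d \ A| + (kh)²) b^{d(km-1)}` bad tuples, half of all tuples once `δ` is small and `n` is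
large. Finally, a solution set comes from at most `(kh)^{km}` tuples, as each free entry is one of
its points.
-/

open Finset

open Function

section

variable {ι α β : Type*} [Fintype ι] [DecidableEq ι]

theorem card_le_card_mul_prod_erase {B : ι → Finset α} {S : Finset (ι → α)}
    (hS : S ⊆ Fintype.piFinset B) (i₀ : ι) (g : (ι → α) → β) {C : Finset β}
    (hg : ∀ y ∈ S, g y ∈ C)
    (hdet : ∀ y ∈ S, ∀ z ∈ S, g y = g z → (∀ i ≠ i₀, y i = z i) → y = z) :
    #S ≤ #C * ∏ i ∈ univ.erase i₀, #(B i) := by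
  have hinj : #S ≤ #(C ×ˢ Fintype.piFinset fun i : {i // i ≠ i₀} => B i) := by
    refine card_le_card_of_injOn (fun y => (g y, fun i => y i)) (fun y hy => ?_) ?_
    · simp only [coe_product, Set.mem_prod, mem_coe, Fintype.mem_piFinset]
      exact ⟨hg y hy, fun i => Fintype.mem_piFinset.mp (hS hy) i⟩
    · intro y hy z hz hyz
      simp only [Prod.mk.injEq, funext_iff, Subtype.forall] at hyz
      exact hdet y hy z hz hyz.1 hyz.2
  rwa [card_product, Fintype.card_piFinset,
    ← prod_subtype (univ.erase i₀) (fun i => by simp) fun i => #(B i)] at hinj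

theorem card_le_pow_mul_card_image [DecidableEq α] {s : Finset (ι → α)}
    (F : (ι → α) → Finset α) {c : ℕ} (hF : ∀ y ∈ s, ∀ i, y i ∈ F y)
    (hc : ∀ y ∈ s, #(F y) ≤ c) :
    #s ≤ c ^ Fintype.card ι * #(s.image F) := by
  refine card_le_mul_card_image s _ fun X hX => ?_
  obtain ⟨y₀, hy₀, rfl⟩ := mem_image.mp hX
  calc #(s.filter fun y => F y = F y₀)
      ≤ #(Fintype.piFinset fun _ : ι => F y₀) := by
        refine card_le_card fun y hy => ?_
        obtain ⟨hys, hyF⟩ := mem_filter.mp hy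
        exact Fintype.mem_piFinset.mpr fun i => hyF ▸ hF y hys i
    _ ≤ c ^ Fintype.card ι := by
        rw [Fintype.card_piFinset, prod_const, card_univ]
        exact Nat.pow_le_pow_left (hc y₀ hy₀) _

end

theorem card_le_natCard_subtype {α : Type*} {P : α → Prop} (s : Finset α)
    (hs : ∀ a ∈ s, P a) (hP : {a | P a}.Finite) : #s ≤ Nat.card {a // P a} :=
  (Set.ncard_coe_finset s).symm.trans_le (Set.ncard_le_ncard hs hP)


theorem mem_grid {n d : ℕ} {x : Fin d → ℕ} :
    x ∈ grid n d ↔ ∀ j, 1 ≤ x j ∧ x j ≤ n := by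
  simp [grid]

theorem card_grid (n d : ℕ) : #(grid n d) = n ^ d := by
  simp [grid, Fintype.card_piFinset]

theorem mul_card_sdiff_le_pow {n d b c M : ℕ} {A : Finset (Fin d → ℕ)} (hA : A ⊆ grid n d)
    (hc : 0 < c) (hM : 0 < M) (hdense : (1 - 1 / ((c : ℝ) * M ^ d)) * (n : ℝ) ^ d ≤ #A)
    (hnb : n ≤ M * b) : c * #(grid n d \ A) ≤ b ^ d := by
  have hcard : (#(grid n d \ A) : ℝ) = n ^ d - #A := by
    rw [card_sdiff_of_subset hA, Nat.cast_sub (card_le_card hA), card_grid]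
    push_cast; ring
  have hn : (n : ℝ) ^ d ≤ M ^ d * b ^ d := by
    rw [← mul_pow]; exact_mod_cast Nat.pow_le_pow_left hnb d
  have hsparse : (c : ℝ) * #(grid n d \ A) ≤ b ^ d := by
    have hcM : (0 : ℝ) < c * M ^ d := by positivity
    have hG : (#(grid n d \ A) : ℝ) ≤ n ^ d / (c * M ^ d) := by
      rw [sub_mul, one_mul, div_mul_eq_mul_div, one_mul] at hdense
      linarith
    calc (c : ℝ) * #(grid n d \ A) ≤ c * (n ^ d / (c * M ^ d)) := by gcongr
      _ = n ^ d / M ^ d := by field_simp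
      _ ≤ b ^ d := by rw [div_le_iff₀ (by positivity)]; linarith
  exact_mod_cast hsparse

theorem card_image_le_fAv {d k h : ℕ} [NeZero k] [NeZero h] {A : Finset (Fin d → ℕ)}
    {v : Fin d → ℕ} {β : Type*} (s : Finset β) (x : β → Fin k × Fin h → Fin d → ℕ)
    (hinj : ∀ y ∈ s, Injective (x y)) (hv : ∀ y ∈ s, x y (0, 0) = v)
    (hA : ∀ y ∈ s, ∀ p ≠ (0, 0), x y p ∈ A)
    (hsum : ∀ y ∈ s, ∀ ℓ₁ ℓ₂, ∑ i, x y (ℓ₁, i) = ∑ i, x y (ℓ₂, i)) :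
    #(s.image fun y => (univ.filter fun p : Fin k × Fin h =>
      ¬((p.1 : ℕ) = 0 ∧ (p.2 : ℕ) = 0)).image (x y)) ≤ fAv d k h A v := by
  refine card_le_natCard_subtype _ ?_ ((A.powerset.finite_toSet).subset ?_)
  · simp only [mem_image]
    rintro _ ⟨y, hy, rfl⟩
    refine ⟨fun ℓ i => x y (ℓ, i), hinj y hy, ?_, fun ℓ i hℓi => ?_, hsum y hy, rfl⟩
    · simp only [Fin.val_eq_zero_iff, and_imp]
      rintro ℓ i rfl rfl
      exact hv y hy
    · have hne : ((ℓ, i) : Fin k × Fin h) ≠ (0, 0) := by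
        simpa [Fin.val_eq_zero_iff] using hℓi
      exact ⟨hA y hy _ hne, fun h => hne (hinj y hy (h.trans (hv y hy).symm))⟩
  · rintro X ⟨x, -, -, hxA, -, rfl⟩
    simp only [coe_powerset, Set.mem_preimage, Set.mem_powerset_iff, coe_subset]
    intro a ha
    obtain ⟨p, hp, rfl⟩ := mem_image.mp ha
    exact (hxA p.1 p.2 (mem_filter.mp hp).2).1

theorem two_mul_mul_lt_add_mul_div {n v m b : ℕ} (hv : 1 ≤ v) (hvn : v ≤ n)
    (hb : 3 * (m + 1) * b ≤ n) : 2 * m * b < v + m * ((n - v) / (m + 1) + 1) := by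
  have hdiv := Nat.div_add_mod (n - v) (m + 1)
  have hmod := Nat.mod_lt (n - v) (Nat.succ_pos m)
  set s := (n - v) / (m + 1)
  set r := (n - v) % (m + 1)
  have hvs : v + (m + 1) * s + r = n := by omega
  nlinarith

theorem le_two_mul_mul_div {n c : ℕ} (hc : 0 < c) (hcn : c ≤ n) : n ≤ 2 * c * (n / c) := by
  have h1 := Nat.lt_mul_div_succ n hc
  have h2 : 1 ≤ n / c := Nat.div_pos hcn hc
  nlinarith

namespace BkhSolution

variable {d k m : ℕ}

def rowSum (y : Fin k × Fin m → Fin d → ℕ) (ℓ : Fin k) : Fin d → ℕ := ∑ i, y (ℓ, i)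

theorem rowSum_eq_of_eqOn_ne {y z : Fin k × Fin m → Fin d → ℕ} {r : Fin k × Fin m}
    (hyz : ∀ r' ≠ r, y r' = z r') {ℓ : Fin k} (hℓ : ℓ ≠ r.1) :
    rowSum y ℓ = rowSum z ℓ :=
  sum_congr rfl fun _ _ => hyz _ fun h => hℓ (congrArg Prod.fst h)

theorem rowSum_add_eq_of_eqOn_ne {y z : Fin k × Fin m → Fin d → ℕ} {ℓ : Fin k} {i : Fin m}
    (hyz : ∀ r ≠ (ℓ, i), y r = z r) :
    rowSum y ℓ + z (ℓ, i) = rowSum z ℓ + y (ℓ, i) := by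
  have hrest : ∑ i' ∈ univ.erase i, y (ℓ, i') = ∑ i' ∈ univ.erase i, z (ℓ, i') :=
    sum_congr rfl fun i' hi' => hyz _ fun h => (ne_of_mem_erase hi') (congrArg Prod.snd h)
  rw [rowSum, rowSum, ← add_sum_erase _ _ (mem_univ i), ← add_sum_erase _ _ (mem_univ i), hrest]
  abel

def box (a : Fin d → ℕ) (b : ℕ) : Finset (Fin d → ℕ) :=
  Fintype.piFinset fun j => Icc (a j + 1) (a j + b)

theorem mem_box {a x : Fin d → ℕ} {b : ℕ} :
    x ∈ box a b ↔ ∀ j, a j + 1 ≤ x j ∧ x j ≤ a j + b := by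
  simp [box]

theorem card_box (a : Fin d → ℕ) (b : ℕ) : #(box a b) = b ^ d := by
  simp [box, Fintype.card_piFinset]

theorem rowSum_apply_mem_Icc {a : Fin d → ℕ} {b : ℕ} {y : Fin k × Fin m → Fin d → ℕ}
    {ℓ : Fin k} (hy : ∀ i, y (ℓ, i) ∈ box a b) (j : Fin d) :
    m * (a j + 1) ≤ rowSum y ℓ j ∧ rowSum y ℓ j ≤ m * (a j + b) := by
  rw [rowSum, Finset.sum_apply]
  constructor
  · simpa using card_nsmul_le_sum univ (fun i => y (ℓ, i) j) _ fun i _ => (mem_box.mp (hy i) j).1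
  · simpa using sum_le_card_nsmul univ (fun i => y (ℓ, i) j) _ fun i _ => (mem_box.mp (hy i) j).2

section Pin

variable [NeZero m] {y z : Fin k × Fin m → Fin d → ℕ}

/-- The parameter that the entry in slot `p ≠ (0, 0)` determines once all other parameters are
fixed. -/
def pin (p : Fin k × Fin (m + 1)) : Fin k × Fin m := (p.1, Fin.cases 0 id p.2)

@[simp] theorem pin_head (ℓ : Fin k) : pin ((ℓ, 0) : Fin k × Fin (m + 1)) = (ℓ, 0) := rfl

theorem eq_of_forall_ne_pin {p : Fin k × Fin (m + 1)} (hyz : ∀ r ≠ pin p, y r = z r)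
    (h : y (pin p) = z (pin p)) : y = z := by
  funext r
  by_cases hr : r = pin p
  · rw [hr, h]
  · exact hyz r hr

end Pin

variable [NeZero k]

-- Exactly when the heads of `solution v y` involve no truncated subtraction.
def IsBalanced (v : Fin d → ℕ) (y : Fin k × Fin m → Fin d → ℕ) : Prop :=
  ∀ ℓ, rowSum y ℓ ≤ v + rowSum y 0

/-- Row `ℓ` of the solution is its head `v + rowSum y 0 - rowSum y ℓ` followed by the parameters
`y (ℓ, ·)`; the head of row `0` is `v`. -/
def solution (v : Fin d → ℕ) (y : Fin k × Fin m → Fin d → ℕ) (p : Fin k × Fin (m + 1)) :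
    Fin d → ℕ :=
  Fin.cases (v + rowSum y 0 - rowSum y p.1) (fun i => y (p.1, i)) p.2

variable {v : Fin d → ℕ} {y z : Fin k × Fin m → Fin d → ℕ}

@[simp] theorem solution_head (ℓ : Fin k) :
    solution v y (ℓ, 0) = v + rowSum y 0 - rowSum y ℓ := rfl

@[simp] theorem solution_succ (ℓ : Fin k) (i : Fin m) :
    solution v y (ℓ, i.succ) = y (ℓ, i) := rfl

@[simp] theorem solution_zero : solution v y (0, 0) = v := by simp

theorem sum_solution (hy : IsBalanced v y) (ℓ : Fin k) :
    ∑ i, solution v y (ℓ, i) = v + rowSum y 0 := by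
  rw [Fin.sum_univ_succ, solution_head]
  exact tsub_add_cancel_of_le (hy ℓ)

theorem solution_eq_of_eqOn_ne {r : Fin k × Fin m} (hyz : ∀ r' ≠ r, y r' = z r')
    {p : Fin k × Fin (m + 1)} (hp : p ≠ (r.1, r.2.succ))
    (hhead : p.2 = 0 → p.1 = 0 ∨ r.1 ≠ 0 ∧ r.1 ≠ p.1) :
    solution v y p = solution v z p := by
  obtain ⟨ℓ, i⟩ := p
  cases i using Fin.cases with
  | zero =>
    rcases hhead rfl with rfl | ⟨h0, hℓ⟩
    · simp
    · rw [solution_head, solution_head, rowSum_eq_of_eqOn_ne hyz h0.symm,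
        rowSum_eq_of_eqOn_ne hyz hℓ.symm]
  | succ i => exact hyz (ℓ, i) fun h => hp (by rw [← h])

section Recovery

variable [NeZero m]

theorem apply_head_eq_of_solution_eq (hy : IsBalanced v y) (hz : IsBalanced v z) {ℓ : Fin k}
    (hℓ : ℓ ≠ 0) (hyz : ∀ r ≠ (ℓ, 0), y r = z r)
    (h : solution v y (ℓ, 0) = solution v z (ℓ, 0)) : y (ℓ, 0) = z (ℓ, 0) := by
  funext j
  have hrow := congrFun (rowSum_add_eq_of_eqOn_ne hyz) j
  have hrow0 := congrFun (rowSum_eq_of_eqOn_ne (ℓ := 0) hyz hℓ.symm) j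
  have hj := congrFun h j
  have hyj := hy ℓ j
  have hzj := hz ℓ j
  simp only [solution_head, Pi.add_apply, Pi.sub_apply] at hrow hrow0 hj hyj hzj
  omega

theorem eq_of_solution_eq (hy : IsBalanced v y) (hz : IsBalanced v z)
    {p : Fin k × Fin (m + 1)} (hp : p ≠ (0, 0)) (hyz : ∀ r ≠ pin p, y r = z r)
    (h : solution v y p = solution v z p) : y = z := by
  refine eq_of_forall_ne_pin hyz ?_
  obtain ⟨ℓ, i⟩ := p
  cases i using Fin.cases with
  | zero => exact apply_head_eq_of_solution_eq hy hz (by rintro rfl; exact hp rfl) hyz h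
  | succ i => exact h

/-- A collision between two slots is charged to `pin` of the one of higher rank: `v` has rank `0`,
the parameter slots rank `1` and the other heads rank `2`. -/
def slotRank (p : Fin k × Fin (m + 1)) : ℕ := if p.2 = 0 then (if p.1 = 0 then 0 else 2) else 1

theorem eq_of_solution_collision (hy : IsBalanced v y) (hz : IsBalanced v z)
    {p q : Fin k × Fin (m + 1)} (hpq : p ≠ q) (hrank : slotRank p ≤ slotRank q)
    (hyz : ∀ r ≠ pin q, y r = z r) (hcy : solution v y p = solution v y q)
    (hcz : solution v z p = solution v z q) : y = z := by
  obtain ⟨ℓ, i⟩ := q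
  have hq : ((ℓ, i) : Fin k × Fin (m + 1)) ≠ (0, 0) := by
    rintro ⟨⟩
    obtain ⟨ℓ', i'⟩ := p
    simp only [slotRank, ite_true, nonpos_iff_eq_zero] at hrank
    split_ifs at hrank with h2 h1
    exact hpq (by rw [h1, h2])
  by_cases hspecial : i = 0 ∧ p = (ℓ, (0 : Fin m).succ)
  · -- the head of row `ℓ` equals its first parameter, which thus enters the row sum twice
    obtain ⟨rfl, rfl⟩ := hspecial
    have hℓ : ℓ ≠ 0 := by rintro rfl; exact hq rfl
    refine eq_of_forall_ne_pin hyz (funext fun j => ?_)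
    rw [pin_head] at hyz ⊢
    have hrow := congrFun (rowSum_add_eq_of_eqOn_ne hyz) j
    have hrow0 := congrFun (rowSum_eq_of_eqOn_ne (ℓ := 0) hyz hℓ.symm) j
    have hyj := congrFun hcy j
    have hzj := congrFun hcz j
    have hby := hy ℓ j
    have hbz := hz ℓ j
    simp only [solution_head, solution_succ, Pi.add_apply, Pi.sub_apply]
      at hrow hrow0 hyj hzj hby hbz ⊢
    omega
  have hp : solution v y p = solution v z p := by
    refine solution_eq_of_eqOn_ne hyz ?_ ?_
    · cases i using Fin.cases with
      | zero => exact fun h => hspecial ⟨rfl, h⟩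
      | succ i => exact hpq
    · intro hp2
      by_cases hp1 : p.1 = 0
      · exact Or.inl hp1
      · have hi : i = 0 := by
          by_contra hi
          simp [slotRank, hp2, hp1, hi] at hrank
        subst hi
        refine Or.inr ⟨fun h => hq (by rw [← h]; rfl), fun h => hpq ?_⟩
        rw [Prod.ext_iff]
        exact ⟨h.symm, hp2⟩
  exact eq_of_solution_eq hy hz hq hyz (by rw [← hcy, ← hcz, hp])

end Recovery

/-- Row `0` is translated by `(n - v) / (m + 1)` so that all heads
`v + rowSum y 0 - rowSum y ℓ` lie in `[1, n]`. -/
def paramBox (n b : ℕ) (v : Fin d → ℕ) (r : Fin k × Fin m) : Finset (Fin d → ℕ) :=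
  if r.1 = 0 then box (fun j => (n - v j) / (m + 1)) b else box (fun _ => b) b

def params (n b : ℕ) (v : Fin d → ℕ) : Finset (Fin k × Fin m → Fin d → ℕ) :=
  Fintype.piFinset (paramBox n b v)

variable {n b : ℕ}

theorem card_paramBox (r : Fin k × Fin m) : #(paramBox n b v r) = b ^ d := by
  unfold paramBox; split_ifs <;> exact card_box _ _

theorem card_params : #(params (k := k) (m := m) n b v) = (b ^ d) ^ (k * m) := by
  simp [params, Fintype.card_piFinset, card_paramBox]

theorem prod_erase_card_paramBox (r : Fin k × Fin m) :
    ∏ r' ∈ univ.erase r, #(paramBox n b v r') = (b ^ d) ^ (k * m - 1) := by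
  simp [card_paramBox, card_erase_of_mem]

theorem mem_box_of_mem_params_zero (hy : y ∈ params n b v) (i : Fin m) :
    y (0, i) ∈ box (fun j => (n - v j) / (m + 1)) b := by
  simpa [paramBox] using Fintype.mem_piFinset.mp hy (0, i)

theorem mem_box_of_mem_params_of_ne_zero (hy : y ∈ params n b v) {ℓ : Fin k} (hℓ : ℓ ≠ 0)
    (i : Fin m) : y (ℓ, i) ∈ box (fun _ => b) b := by
  simpa [paramBox, hℓ] using Fintype.mem_piFinset.mp hy (ℓ, i)

section Bounds

variable (hv : v ∈ grid n d) (hb : 3 * (m + 1) * b ≤ n) (hy : y ∈ params n b v)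
include hv hb hy

theorem rowSum_lt_of_mem_params {ℓ : Fin k} (hℓ : ℓ ≠ 0) (j : Fin d) :
    rowSum y ℓ j < v j + rowSum y 0 j := by
  have hrow := rowSum_apply_mem_Icc (mem_box_of_mem_params_of_ne_zero hy hℓ) j
  have hrow0 := rowSum_apply_mem_Icc (mem_box_of_mem_params_zero hy) j
  have hvj := mem_grid.mp hv j
  have := two_mul_mul_lt_add_mul_div hvj.1 hvj.2 hb
  nlinarith

theorem isBalanced_of_mem_params : IsBalanced v y := fun ℓ j => by
  by_cases hℓ : ℓ = 0
  · subst hℓ; exact le_add_self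
  · exact (rowSum_lt_of_mem_params hv hb hy hℓ j).le

theorem solution_mem_grid [NeZero m] (p : Fin k × Fin (m + 1)) :
    solution v y p ∈ grid n d := by
  have hm : 1 ≤ m := NeZero.one_le
  obtain ⟨ℓ, i⟩ := p
  refine mem_grid.mpr fun j => ?_
  have hvj := mem_grid.mp hv j
  have hs := Nat.mul_div_le (n - v j) (m + 1)
  rw [add_mul, one_mul] at hs
  have hbm : 3 * b + 3 * b ≤ n := by nlinarith
  cases i using Fin.cases with
  | zero =>
    by_cases hℓ : ℓ = 0
    · subst hℓ; simpa using hvj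
    have hlt := rowSum_lt_of_mem_params hv hb hy hℓ j
    have hrow := rowSum_apply_mem_Icc (mem_box_of_mem_params_of_ne_zero hy hℓ) j
    have hrow0 := rowSum_apply_mem_Icc (mem_box_of_mem_params_zero hy) j
    simp only [mul_add, mul_one] at hrow hrow0
    generalize (n - v j) / (m + 1) = s at hs hrow0
    simp only [solution_head, Pi.add_apply, Pi.sub_apply]
    omega
  | succ i =>
    simp only [solution_succ]
    by_cases hℓ : ℓ = 0
    · subst hℓ
      have := mem_box.mp (mem_box_of_mem_params_zero hy i) j
      generalize (n - v j) / (m + 1) = s at hs this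
      have : s ≤ m * s := Nat.le_mul_of_pos_left s hm
      omega
    · have := mem_box.mp (mem_box_of_mem_params_of_ne_zero hy hℓ i) j
      omega

end Bounds

def goodParams (n b : ℕ) (A : Finset (Fin d → ℕ)) (v : Fin d → ℕ) :
    Finset (Fin k × Fin m → Fin d → ℕ) :=
  (params n b v).filter fun y =>
    (∀ p ≠ (0, 0), solution v y p ∈ A) ∧ Injective (solution v y)

section Counting

variable (hv : v ∈ grid n d) (hb : 3 * (m + 1) * b ≤ n)
include hv hb

theorem card_goodParams_le (A : Finset (Fin d → ℕ)) :
    #(goodParams (k := k) (m := m) n b A v) ≤ (k * (m + 1)) ^ (k * m) * fAv d k (m + 1) A v := by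
  have hfactor := card_le_pow_mul_card_image (s := goodParams (k := k) (m := m) n b A v)
    (fun y => (univ.filter fun p : Fin k × Fin (m + 1) =>
      ¬((p.1 : ℕ) = 0 ∧ (p.2 : ℕ) = 0)).image (solution v y)) (c := k * (m + 1))
    (fun y _ r => mem_image.mpr ⟨(r.1, r.2.succ), by simp, rfl⟩)
    (fun y _ => card_image_le.trans ((card_filter_le _ _).trans_eq (by simp)))
  rw [Fintype.card_prod, Fintype.card_fin, Fintype.card_fin] at hfactor
  refine hfactor.trans (Nat.mul_le_mul_left _ (card_image_le_fAv _ _ ?_ ?_ ?_ ?_)) <;>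
    intro y hy <;> obtain ⟨hy, hyA, hinj⟩ := mem_filter.mp hy
  · exact hinj
  · exact solution_zero
  · exact hyA
  · intro ℓ₁ ℓ₂
    rw [sum_solution (isBalanced_of_mem_params hv hb hy),
      sum_solution (isBalanced_of_mem_params hv hb hy)]

variable [NeZero m]

theorem card_filter_solution_notMem_le (A : Finset (Fin d → ℕ)) {p : Fin k × Fin (m + 1)}
    (hp : p ≠ (0, 0)) :
    #((params n b v).filter fun y => solution v y p ∉ A)
      ≤ #(grid n d \ A) * (b ^ d) ^ (k * m - 1) := by
  refine (card_le_card_mul_prod_erase (B := paramBox n b v) (filter_subset _ _) (pin p)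
    (fun y => solution v y p) (fun y hy => ?_) fun y hy z hz h hyz => ?_).trans_eq
    (by rw [prod_erase_card_paramBox])
  · obtain ⟨hy, hyA⟩ := mem_filter.mp hy
    exact mem_sdiff.mpr ⟨solution_mem_grid hv hb hy p, hyA⟩
  · exact eq_of_solution_eq (isBalanced_of_mem_params hv hb (mem_filter.mp hy).1)
      (isBalanced_of_mem_params hv hb (mem_filter.mp hz).1) hp hyz h

theorem card_filter_solution_eq_le {p q : Fin k × Fin (m + 1)} (hpq : p ≠ q) :
    #((params n b v).filter fun y => solution v y p = solution v y q)
      ≤ (b ^ d) ^ (k * m - 1) := by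
  wlog hrank : slotRank p ≤ slotRank q generalizing p q
  · simpa only [eq_comm] using this hpq.symm (le_of_not_ge hrank)
  refine (card_le_card_mul_prod_erase (B := paramBox n b v) (filter_subset _ _) (pin q)
    (fun _ => ()) (C := univ) (fun _ _ => mem_univ _) fun y hy z hz _ hyz => ?_).trans_eq
    (by rw [prod_erase_card_paramBox, card_univ, Fintype.card_unit, one_mul])
  obtain ⟨hy, hcy⟩ := mem_filter.mp hy
  obtain ⟨hz, hcz⟩ := mem_filter.mp hz
  exact eq_of_solution_collision (isBalanced_of_mem_params hv hb hy)
    (isBalanced_of_mem_params hv hb hz) hpq hrank hyz hcy hcz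

theorem card_sdiff_goodParams_le (A : Finset (Fin d → ℕ)) :
    #(params (k := k) (m := m) n b v \ goodParams n b A v)
      ≤ k * (m + 1) * (#(grid n d \ A) * (b ^ d) ^ (k * m - 1))
        + (k * (m + 1)) ^ 2 * (b ^ d) ^ (k * m - 1) := by
  have hslots : Fintype.card (Fin k × Fin (m + 1)) = k * (m + 1) := by simp
  calc _ ≤ #(((univ.filter (· ≠ (0, 0))).biUnion fun p =>
              (params n b v).filter fun y => solution v y p ∉ A) ∪
            (univ.filter fun pq : (Fin k × Fin (m + 1)) × (Fin k × Fin (m + 1)) =>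
              pq.1 ≠ pq.2).biUnion fun pq =>
                (params n b v).filter fun y => solution v y pq.1 = solution v y pq.2) := by
        refine card_le_card fun y hy => ?_
        obtain ⟨hy, hbad⟩ := mem_sdiff.mp hy
        rw [goodParams, mem_filter] at hbad
        simp only [hy, true_and, Injective, not_and_or, not_forall, exists_prop] at hbad
        simp only [mem_union, mem_biUnion, mem_filter, mem_univ, true_and]
        rcases hbad with ⟨p, hp, hpA⟩ | ⟨p, q, hpq, hne⟩
        · exact Or.inl ⟨p, hp, hy, hpA⟩
        · exact Or.inr ⟨(p, q), hne, hy, hpq⟩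
    _ ≤ _ := card_union_le _ _
    _ ≤ _ := by
        gcongr
        · refine (card_biUnion_le_card_mul _ _ _ fun p hp =>
            card_filter_solution_notMem_le hv hb A (mem_filter.mp hp).2).trans ?_
          gcongr
          exact (card_filter_le _ _).trans_eq (by rw [card_univ, hslots])
        · refine (card_biUnion_le_card_mul _ _ _ fun pq hpq =>
            card_filter_solution_eq_le hv hb (mem_filter.mp hpq).2).trans ?_
          gcongr
          exact (card_filter_le _ _).trans_eq (by rw [card_univ, Fintype.card_prod, hslots, sq])

theorem card_params_le_two_mul_card_goodParams (A : Finset (Fin d → ℕ))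
    (hsparse : 4 * (k * (m + 1)) * #(grid n d \ A) ≤ b ^ d)
    (hlarge : 4 * (k * (m + 1)) ^ 2 ≤ b ^ d) :
    #(params (k := k) (m := m) n b v) ≤ 2 * #(goodParams (k := k) (m := m) n b A v) := by
  have hsplit := card_sdiff_add_card_eq_card
    (filter_subset _ _ : goodParams (k := k) (m := m) n b A v ⊆ params n b v)
  have hbad := card_sdiff_goodParams_le (k := k) (m := m) hv hb A
  have hpow : (b ^ d) ^ (k * m) = b ^ d * (b ^ d) ^ (k * m - 1) := by
    rw [← pow_succ', Nat.sub_add_cancel (Nat.one_le_iff_ne_zero.mpr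
      (mul_ne_zero (NeZero.ne k) (NeZero.ne m)))]
  rw [card_params, hpow] at hsplit
  rw [card_params, hpow]
  unfold goodParams at hbad ⊢
  set R := (b ^ d) ^ (k * m - 1)
  have hR : 2 * (k * (m + 1) * (#(grid n d \ A) * R) + (k * (m + 1)) ^ 2 * R) ≤ b ^ d * R := by
    nlinarith
  omega

end Counting

theorem pow_le_mul_fAv [NeZero m] {A : Finset (Fin d → ℕ)} (hAv : v ∈ A) (hA : A ⊆ grid n d)
    (hb : 3 * (m + 1) * b ≤ n) (hsparse : 4 * (k * (m + 1)) * #(grid n d \ A) ≤ b ^ d)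
    (hlarge : 4 * (k * (m + 1)) ^ 2 ≤ b ^ d) :
    (b ^ d) ^ (k * m) ≤ 2 * (k * (m + 1)) ^ (k * m) * fAv d k (m + 1) A v := by
  rw [← card_params (n := n) (v := v), mul_assoc]
  exact (card_params_le_two_mul_card_goodParams (hA hAv) hb A hsparse hlarge).trans
    (Nat.mul_le_mul_left 2 (card_goodParams_le (hA hAv) hb A))

end BkhSolution

/-- lower bound on `f_A(v)` for dense subsets `A` of the grid. -/
theorem stmt11 (d k h : ℕ) (hd : 1 ≤ d) (hk : 2 ≤ k) (hh : 2 ≤ h) :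
    ∃ c : ℝ, 0 < c ∧ ∃ δ : ℝ, 0 < δ ∧ ∃ N : ℕ, ∀ n : ℕ, N ≤ n →
      ∀ A : Finset (Fin d → ℕ), A ⊆ grid n d →
      (1 - δ) * (n : ℝ) ^ d ≤ (A.card : ℝ) →
      ∀ v ∈ A, c * (n : ℝ) ^ (d * k * (h - 1)) ≤ (fAv d k h A v : ℝ) := by
  obtain ⟨m, rfl⟩ : ∃ m, h = m + 1 := ⟨h - 1, by omega⟩
  have : NeZero k := ⟨by omega⟩
  have : NeZero m := ⟨by omega⟩
  set L := k * (m + 1)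
  set M := 2 * (3 * (m + 1))
  refine ⟨1 / (2 * L ^ (k * m) * M ^ (d * (k * m))), by positivity,
    1 / (((4 * L : ℕ) : ℝ) * M ^ d), by positivity, 12 * L ^ 2 * (m + 1),
    fun n hn A hA hdense v hv => ?_⟩
  set b := n / (3 * (m + 1))
  have hL : 1 ≤ L := Nat.one_le_iff_ne_zero.mpr (mul_ne_zero (NeZero.ne k) m.succ_ne_zero)
  have hLb : 4 * L ^ 2 ≤ b := (Nat.le_div_iff_mul_le (by positivity)).mpr (by linarith)
  have hb1 : 1 ≤ b := le_trans (by nlinarith) hLb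
  have hnb : n ≤ M * b :=
    le_two_mul_mul_div (by positivity) ((Nat.le_mul_of_pos_right _ hb1).trans (Nat.mul_div_le n _))
  have hfAv := BkhSolution.pow_le_mul_fAv hv hA (Nat.mul_div_le n _)
    (mul_card_sdiff_le_pow hA (by positivity) (by positivity) hdense hnb)
    (hLb.trans (Nat.le_self_pow (by omega) b))
  have hnat : n ^ (d * (k * m)) ≤ M ^ (d * (k * m)) * (2 * L ^ (k * m) * fAv d k (m + 1) A v) :=
    calc n ^ (d * (k * m)) ≤ (M * b) ^ (d * (k * m)) := Nat.pow_le_pow_left hnb _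
      _ = M ^ (d * (k * m)) * (b ^ d) ^ (k * m) := by rw [mul_pow, pow_mul b]
      _ ≤ _ := Nat.mul_le_mul_left _ hfAv
  rw [show d * k * (m + 1 - 1) = d * (k * m) by rw [Nat.add_sub_cancel, mul_assoc],
    div_mul_eq_mul_div, one_mul, div_le_iff₀ (by positivity)]
  calc (n : ℝ) ^ (d * (k * m))
      ≤ M ^ (d * (k * m)) * (2 * L ^ (k * m) * fAv d k (m + 1) A v) := by exact_mod_cast hnat
    _ = _ := by ring
end
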